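/- arXiv:2404.00567 — 6 statements merged into one kernel-verified Lean document; each statement's English description precedes it below -/
import Mathlib

section
/- Let R be a d-class association scheme. If every pair of non-trivial relations {A_i, A_j} with 1 ≤ i < j ≤ d fuses, then R is amorphic. -/
open Matrix

section Defs

variable {X ι : Type*}

/-- The all-ones matrix `J`. -/
def allOnes (X : Type*) : Matrix X X ℝ := Matrix.of fun _ _ => 1

/-- A family of symmetric 01-matrices indexed by `ι` forming a (symmetric) association
scheme, with the identity relation at index `o`. -/
def IsASFamily [Fintype X] [DecidableEq X] [Fintype ι] (A : ι → Matrix X X ℝ) (o : ι) :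
    Prop :=
  A o = 1 ∧
  ∑ i, A i = allOnes X ∧
  (∀ i, (A i).IsSymm) ∧
  (∀ i x y, A i x y = 0 ∨ A i x y = 1) ∧
  ∀ i j, ∃ p : ι → ℝ, A i * A j = ∑ h, p h • A h

/-- A `d`-class association scheme, given by its relations `A 0, …, A d`. -/
abbrev IsAssociationScheme [Fintype X] [DecidableEq X] {d : ℕ}
    (A : Fin (d + 1) → Matrix X X ℝ) : Prop :=
  IsASFamily A 0

/-- The family of fused relations along the class map `f`. -/
def fusedFamily {d d' : ℕ} (A : Fin (d + 1) → Matrix X X ℝ)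
    (f : Fin (d + 1) → Fin (d' + 1)) : Fin (d' + 1) → Matrix X X ℝ :=
  fun i => ∑ k ∈ Finset.univ.filter (fun k => f k = i), A k

/-- `f` encodes a partition of `{0, …, d}` having `{0}` as a class (classes = fibers). -/
def IsFusionMap {d d' : ℕ} (f : Fin (d + 1) → Fin (d' + 1)) : Prop :=
  Function.Surjective f ∧ ∀ k, f k = 0 ↔ k = 0

/-- An association scheme is amorphic if every partition of the index set with `{0}` as a
class gives rise to a fusion scheme. -/
def IsAmorphic [Fintype X] [DecidableEq X] {d : ℕ} (A : Fin (d + 1) → Matrix X X ℝ) :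
    Prop :=
  ∀ (d' : ℕ) (f : Fin (d + 1) → Fin (d' + 1)), IsFusionMap f →
    IsAssociationScheme (fusedFamily A f)

/-- `f` encodes the partition of `{0, …, d}` whose unique non-singleton class is `{i, j}`. -/
def PairPartition {d : ℕ} (f : Fin (d + 1) → Fin (d - 1 + 1)) (i j : Fin (d + 1)) : Prop :=
  IsFusionMap f ∧ ∀ k l, f k = f l ↔ (k = l ∨ (k = i ∧ l = j) ∨ (k = j ∧ l = i))

/-- The pair of non-trivial relations `{A i, A j}` fuses. -/
def PairFuses [Fintype X] [DecidableEq X] {d : ℕ} (A : Fin (d + 1) → Matrix X X ℝ)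
    (i j : Fin (d + 1)) : Prop :=
  i ≠ 0 ∧ j ≠ 0 ∧ i ≠ j ∧
  ∃ f : Fin (d + 1) → Fin (d - 1 + 1), PairPartition f i j ∧
    IsAssociationScheme (fusedFamily A f)

/-- The fusing-relations graph, on the vertex set `{1, …, d}`. -/
def fusingRelationsGraph [Fintype X] [DecidableEq X] {d : ℕ}
    (A : Fin (d + 1) → Matrix X X ℝ) : SimpleGraph {i : Fin (d + 1) // i ≠ 0} :=
  SimpleGraph.fromRel fun i j => PairFuses A i.1 j.1

/-- `E 0, …, E d` is the family of minimal idempotents of the scheme `A 0, …, A d`. -/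
def IsMinimalIdempotentFamily [Fintype X] [DecidableEq X] {d : ℕ}
    (A E : Fin (d + 1) → Matrix X X ℝ) : Prop :=
  E 0 = (Fintype.card X : ℝ)⁻¹ • allOnes X ∧
  ∑ j, E j = 1 ∧
  (∀ i j, E i * E j = if i = j then E i else 0) ∧
  (∀ j, (E j).IsSymm) ∧
  ∀ j, ∃ c : Fin (d + 1) → ℝ, E j = ∑ i, c i • A i

/-- The pair of non-trivial minimal idempotents `{E i, E j}` fuses: some fusion scheme of
the scheme has `{E k : k ∉ {i,j}} ∪ {E i + E j}` as its set of minimal idempotents. -/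
def IdemPairFuses [Fintype X] [DecidableEq X] {d : ℕ} (A E : Fin (d + 1) → Matrix X X ℝ)
    (i j : Fin (d + 1)) : Prop :=
  i ≠ 0 ∧ j ≠ 0 ∧ i ≠ j ∧
  ∃ (d' : ℕ) (f : Fin (d + 1) → Fin (d' + 1)), IsFusionMap f ∧
    IsAssociationScheme (fusedFamily A f) ∧
    ∃ E' : Fin (d' + 1) → Matrix X X ℝ,
      IsMinimalIdempotentFamily (fusedFamily A f) E' ∧
      Set.range E' = (E '' {k | k ≠ i ∧ k ≠ j}) ∪ {E i + E j}

/-- The fusing-idempotents graph, on the vertex set `{1, …, d}`. -/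
def fusingIdempotentsGraph [Fintype X] [DecidableEq X] {d : ℕ}
    (A E : Fin (d + 1) → Matrix X X ℝ) : SimpleGraph {i : Fin (d + 1) // i ≠ 0} :=
  SimpleGraph.fromRel fun i j => IdemPairFuses A E i.1 j.1

/-- `A` is the adjacency matrix of a strongly regular graph with parameters `(v,k,l,m)`:
a symmetric 01-matrix with zero diagonal, non-empty, non-complete, with
`A² = k I + l A + m (J - I - A)`. -/
def IsSRGMatrix [Fintype X] [DecidableEq X] (A : Matrix X X ℝ) (v k l m : ℕ) : Prop :=
  Fintype.card X = v ∧
  A.IsSymm ∧ (∀ x, A x x = 0) ∧ (∀ x y, A x y = 0 ∨ A x y = 1) ∧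
  A ≠ 0 ∧ A ≠ allOnes X - 1 ∧
  A * A = (k : ℝ) • (1 : Matrix X X ℝ) + (l : ℝ) • A + (m : ℝ) • (allOnes X - 1 - A)

/-- `x` is a restricted eigenvalue of a strongly regular graph with parameters `(v,k,l,m)`,
i.e. a root of `x² - (l - m) x - (k - m)`. -/
def IsRestrictedEig (k l m : ℕ) (x : ℝ) : Prop :=
  x ^ 2 - ((l : ℝ) - (m : ℝ)) * x - ((k : ℝ) - (m : ℝ)) = 0

/-- Strongly regular parameters of Latin square type: `v = n²`, `k = t (n-1)` and the
restricted eigenvalues are `n - t` and `-t`, for positive integers `n`, `t`. -/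
def IsLSParams (v k l m : ℕ) : Prop :=
  ∃ n t : ℤ, 0 < n ∧ 0 < t ∧ (v : ℤ) = n ^ 2 ∧ (k : ℤ) = t * (n - 1) ∧
    IsRestrictedEig k l m ((n : ℝ) - (t : ℝ)) ∧ IsRestrictedEig k l m (-(t : ℝ))

/-- Strongly regular parameters of negative Latin square type. -/
def IsNLSParams (v k l m : ℕ) : Prop :=
  ∃ n t : ℤ, n < 0 ∧ t < 0 ∧ (v : ℤ) = n ^ 2 ∧ (k : ℤ) = t * (n - 1) ∧
    IsRestrictedEig k l m ((n : ℝ) - (t : ℝ)) ∧ IsRestrictedEig k l m (-(t : ℝ))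

/-- `A` is the adjacency matrix of a strongly regular graph of Latin square type. -/
def IsLSTypeSRG [Fintype X] [DecidableEq X] (A : Matrix X X ℝ) : Prop :=
  ∃ v k l m : ℕ, IsSRGMatrix A v k l m ∧ IsLSParams v k l m

/-- `A` is the adjacency matrix of a strongly regular graph of negative Latin square type. -/
def IsNLSTypeSRG [Fintype X] [DecidableEq X] (A : Matrix X X ℝ) : Prop :=
  ∃ v k l m : ℕ, IsSRGMatrix A v k l m ∧ IsNLSParams v k l m

/-- Strongly regular parameters of a conference graph: `k = (v-1)/2` and restricted
eigenvalues `(-1 ± √v)/2`. -/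
def IsConferenceParams (v k l m : ℕ) : Prop :=
  2 * k + 1 = v ∧ IsRestrictedEig k l m ((-1 + Real.sqrt v) / 2) ∧
    IsRestrictedEig k l m ((-1 - Real.sqrt v) / 2)

/-- The `j`-th idempotent (read off from the second eigenmatrix `Q` of a scheme on `v`
points) is strongly regular of Latin square type: `v = n²`, its rank `Q 0 j` equals
`t (n-1)`, and its restricted dual eigenvalues are exactly `n - t` and `-t`. -/
def IdemLSType {d : ℕ} (v : ℕ) (Q : Matrix (Fin (d + 1)) (Fin (d + 1)) ℝ)
    (j : Fin (d + 1)) : Prop :=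
  ∃ n t : ℤ, 0 < n ∧ 0 < t ∧ (v : ℤ) = n ^ 2 ∧ Q 0 j = ((t * (n - 1) : ℤ) : ℝ) ∧
    {x : ℝ | ∃ i : Fin (d + 1), i ≠ 0 ∧ Q i j = x} = {(n : ℝ) - (t : ℝ), -(t : ℝ)}

/-- Strongly regular idempotent of negative Latin square type. -/
def IdemNLSType {d : ℕ} (v : ℕ) (Q : Matrix (Fin (d + 1)) (Fin (d + 1)) ℝ)
    (j : Fin (d + 1)) : Prop :=
  ∃ n t : ℤ, n < 0 ∧ t < 0 ∧ (v : ℤ) = n ^ 2 ∧ Q 0 j = ((t * (n - 1) : ℤ) : ℝ) ∧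
    {x : ℝ | ∃ i : Fin (d + 1), i ≠ 0 ∧ Q i j = x} = {(n : ℝ) - (t : ℝ), -(t : ℝ)}

/-- The linear functional `x ↦ ∑ u, x u`. -/
noncomputable def sumLin (X : Type*) [Fintype X] : (X → ℝ) →ₗ[ℝ] ℝ where
  toFun x := ∑ u, x u
  map_add' x y := by simp [Finset.sum_add_distrib]
  map_smul' c x := by simp [Finset.mul_sum]

/-- The common restricted eigenspace `{x : ∑ x = 0, A₁ x = θ x, A₂ x = η x}`. -/
noncomputable def restrictedEigenspace [Fintype X] (A1 A2 : Matrix X X ℝ) (θ η : ℝ) :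
    Submodule ℝ (X → ℝ) :=
  LinearMap.ker (sumLin X) ⊓
    LinearMap.ker (A1.mulVecLin - θ • (LinearMap.id : (X → ℝ) →ₗ[ℝ] X → ℝ)) ⊓
    LinearMap.ker (A2.mulVecLin - η • (LinearMap.id : (X → ℝ) →ₗ[ℝ] X → ℝ))

/-- Fusing the relations `A i` and `A j` produces a scheme whose set of minimal
idempotents is `{E k : k ∉ {i', j'}} ∪ {E i' + E j'}`. -/
def FusionIdemSetEq [Fintype X] [DecidableEq X] {d : ℕ} (A E : Fin (d + 1) → Matrix X X ℝ)
    (i j i' j' : Fin (d + 1)) : Prop :=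
  ∀ f : Fin (d + 1) → Fin (d - 1 + 1), PairPartition f i j →
    ∀ E' : Fin (d - 1 + 1) → Matrix X X ℝ,
      IsMinimalIdempotentFamily (fusedFamily A f) E' →
      Set.range E' = (E '' {k | k ≠ i' ∧ k ≠ j'}) ∪ {E i' + E j'}

end Defs

section Helpers

open Finset

variable {X : Type*} [Fintype X] [DecidableEq X]

lemma others_zero {ι : Type*} [Fintype ι] [DecidableEq ι] {A : ι → Matrix X X ℝ}
    (hsum : ∑ i, A i = allOnes X) (h01 : ∀ i x y, A i x y = 0 ∨ A i x y = 1)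
    {k : ι} {x y : X} (hk : A k x y = 1) : ∀ m, m ≠ k → A m x y = 0 := by
  have hs : ∑ i, A i x y = 1 := by
    have := congrFun (congrFun hsum x) y
    rwa [Matrix.sum_apply] at this
  have h2 : ∑ m ∈ Finset.univ.erase k, A m x y + A k x y = ∑ i, A i x y :=
    Finset.sum_erase_add Finset.univ (fun m => A m x y) (Finset.mem_univ k)
  have h0 : ∑ m ∈ Finset.univ.erase k, A m x y = 0 := by
    rw [hs, hk] at h2
    linarith
  intro m hm
  refine (Finset.sum_eq_zero_iff_of_nonneg ?_).mp h0 m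
    (Finset.mem_erase.mpr ⟨hm, Finset.mem_univ m⟩)
  intro n _
  rcases h01 n x y with h | h <;> rw [h] <;> norm_num

lemma exists_rel {ι : Type*} [Fintype ι] {A : ι → Matrix X X ℝ}
    (hsum : ∑ i, A i = allOnes X) (h01 : ∀ i x y, A i x y = 0 ∨ A i x y = 1)
    (x y : X) : ∃ k, A k x y = 1 := by
  by_contra hno
  push_neg at hno
  have hz : ∀ k, A k x y = 0 := fun k => (h01 k x y).resolve_right (hno k)
  have hs : ∑ i, A i x y = 1 := by
    have := congrFun (congrFun hsum x) y
    rwa [Matrix.sum_apply] at this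
  rw [Finset.sum_eq_zero (fun k _ => hz k)] at hs
  norm_num at hs

lemma fused_apply {d d' : ℕ} {A : Fin (d + 1) → Matrix X X ℝ}
    (f : Fin (d + 1) → Fin (d' + 1)) {k₀ : Fin (d + 1)} {x y : X}
    (hk : A k₀ x y = 1) (ho : ∀ m, m ≠ k₀ → A m x y = 0) (i : Fin (d' + 1)) :
    fusedFamily A f i x y = if f k₀ = i then 1 else 0 := by
  unfold fusedFamily
  rw [Matrix.sum_apply]
  by_cases hfi : f k₀ = i
  · rw [if_pos hfi, Finset.sum_eq_single_of_mem k₀ (by simp [hfi])]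
    · exact hk
    · exact fun b _ hb => ho b hb
  · rw [if_neg hfi, Finset.sum_eq_zero]
    intro b hb
    apply ho
    rintro rfl
    exact hfi (by simpa using hb)

lemma fused_one {d d' : ℕ} {A : Fin (d + 1) → Matrix X X ℝ}
    (hsum : ∑ i, A i = allOnes X) (h01 : ∀ i x y, A i x y = 0 ∨ A i x y = 1)
    {k : Fin (d + 1)} {x y : X} (hk : A k x y = 1) (g : Fin (d + 1) → Fin (d' + 1)) :
    fusedFamily A g (g k) x y = 1 := by
  rw [fused_apply g hk (others_zero hsum h01 hk), if_pos rfl]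

lemma mul_apply_const {e : ℕ} {B : Fin (e + 1) → Matrix X X ℝ} (hB : IsAssociationScheme B)
    {u v k : Fin (e + 1)} {x y x' y' : X} (hxy : B k x y = 1) (hxy' : B k x' y' = 1) :
    (B u * B v) x y = (B u * B v) x' y' := by
  obtain ⟨p, hp⟩ := hB.2.2.2.2 u v
  have key : ∀ a b : X, B k a b = 1 → (B u * B v) a b = p k := by
    intro a b hab
    have ho := others_zero hB.2.1 hB.2.2.2.1 hab
    rw [hp, Matrix.sum_apply, Finset.sum_eq_single k]
    · rw [Matrix.smul_apply, hab, smul_eq_mul, mul_one]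
    · intro m _ hm
      rw [Matrix.smul_apply, ho m hm, smul_zero]
    · exact fun hk => absurd (Finset.mem_univ k) hk
  rw [key x y hxy, key x' y' hxy']

lemma fused_decomp {d d' e : ℕ} {A : Fin (d + 1) → Matrix X X ℝ}
    {f : Fin (d + 1) → Fin (d' + 1)} {k k' : Fin (d + 1)} (hkk : f k = f k')
    {g : Fin (d + 1) → Fin (e + 1)}
    (hg : ∀ a b, g a = g b ↔ (a = b ∨ (a = k ∧ b = k') ∨ (a = k' ∧ b = k)))
    (i : Fin (d' + 1)) :
    fusedFamily A f i =
      ∑ u ∈ (Finset.univ.filter fun a => f a = i).image g, fusedFamily A g u := by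
  have hdisj : Set.PairwiseDisjoint
      (↑((Finset.univ.filter fun a => f a = i).image g))
      (fun u => Finset.univ.filter fun a => g a = u) := by
    intro u _ v _ huv
    refine Finset.disjoint_left.mpr ?_
    intro a ha hb
    rw [Finset.mem_filter] at ha hb
    exact huv (ha.2.symm.trans hb.2)
  unfold fusedFamily
  rw [← Finset.sum_biUnion hdisj]
  congr 1
  ext a
  simp only [Finset.mem_biUnion, Finset.mem_image, Finset.mem_filter, Finset.mem_univ, true_and]
  constructor
  · intro ha
    exact ⟨g a, ⟨a, ha, rfl⟩, rfl⟩
  · rintro ⟨u, ⟨a₀, ha₀, hga₀⟩, hga⟩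
    rcases (hg a a₀).mp (hga.trans hga₀.symm) with rfl | ⟨rfl, rfl⟩ | ⟨rfl, rfl⟩
    · exact ha₀
    · rw [hkk]; exact ha₀
    · rw [← hkk]; exact ha₀

lemma main_const {d : ℕ} {A : Fin (d + 1) → Matrix X X ℝ} (hA : IsAssociationScheme A)
    (h : ∀ i j : Fin (d + 1), i ≠ 0 → j ≠ 0 → i ≠ j → PairFuses A i j)
    {d' : ℕ} {f : Fin (d + 1) → Fin (d' + 1)} (hf : IsFusionMap f)
    {k k' : Fin (d + 1)} (hkk : f k = f k') {x y x' y' : X}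
    (hk : A k x y = 1) (hk' : A k' x' y' = 1) (i j : Fin (d' + 1)) :
    (fusedFamily A f i * fusedFamily A f j) x y =
      (fusedFamily A f i * fusedFamily A f j) x' y' := by
  by_cases hkeq : k = k'
  · subst hkeq
    unfold fusedFamily
    rw [Finset.sum_mul_sum]
    simp only [Matrix.sum_apply]
    exact Finset.sum_congr rfl fun a _ => Finset.sum_congr rfl fun b _ =>
      mul_apply_const hA hk hk'
  · have hk0 : k ≠ 0 := by
      rintro rfl
      exact hkeq (((hf.2 k').mp (hkk ▸ (hf.2 0).mpr rfl)).symm)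
    have hk'0 : k' ≠ 0 := by
      rintro rfl
      exact hkeq ((hf.2 k).mp (hkk.trans ((hf.2 0).mpr rfl)))
    obtain ⟨-, -, -, g, ⟨hgf, hg2⟩, hFg⟩ := h k k' hk0 hk'0 hkeq
    have hgkk : g k = g k' := (hg2 k k').mpr (Or.inr (Or.inl ⟨rfl, rfl⟩))
    have hx : fusedFamily A g (g k) x y = 1 := fused_one hA.2.1 hA.2.2.2.1 hk g
    have hx' : fusedFamily A g (g k) x' y' = 1 := by
      rw [hgkk]; exact fused_one hA.2.1 hA.2.2.2.1 hk' g
    rw [fused_decomp hkk hg2 i, fused_decomp hkk hg2 j, Finset.sum_mul_sum]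
    simp only [Matrix.sum_apply]
    exact Finset.sum_congr rfl fun u _ => Finset.sum_congr rfl fun v _ =>
      mul_apply_const hFg hx hx'

end Helpers

/-- If every pair of non-trivial relations of an association scheme
fuses, then the scheme is amorphic. -/
theorem all_pairs_fuse_isAmorphic
    {X : Type*} [Fintype X] [DecidableEq X] {d : ℕ}
    (A : Fin (d + 1) → Matrix X X ℝ) (hA : IsAssociationScheme A)
    (h : ∀ i j : Fin (d + 1), i ≠ 0 → j ≠ 0 → i ≠ j → PairFuses A i j) :
    IsAmorphic A := by
  intro d' f hf
  obtain ⟨hA0, hAsum, hAsymm, hA01, hAmul⟩ := hA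
  have hAS : IsAssociationScheme A := ⟨hA0, hAsum, hAsymm, hA01, hAmul⟩
  refine ⟨?_, ?_, ?_, ?_, ?_⟩
  · -- identity
    have h0 : Finset.univ.filter (fun k => f k = (0 : Fin (d' + 1))) = {0} := by
      ext k
      simp [hf.2 k]
    show fusedFamily A f 0 = 1
    unfold fusedFamily
    rw [h0, Finset.sum_singleton, hA0]
  · -- sum = J
    show ∑ i, fusedFamily A f i = allOnes X
    unfold fusedFamily
    rw [Finset.sum_fiberwise Finset.univ f (fun k => A k)]
    exact hAsum
  · -- symmetry
    intro i
    show (fusedFamily A f i).IsSymm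
    unfold fusedFamily Matrix.IsSymm
    rw [Matrix.transpose_sum]
    exact Finset.sum_congr rfl fun k _ => hAsymm k
  · -- 01 entries
    intro i x y
    obtain ⟨k₀, hk₀⟩ := exists_rel hAsum hA01 x y
    rw [fused_apply f hk₀ (others_zero hAsum hA01 hk₀) i]
    split_ifs <;> simp
  · -- closure
    intro i j
    classical
    refine ⟨fun c =>
      if hc : ∃ q : Fin (d + 1) × X × X, f q.1 = c ∧ A q.1 q.2.1 q.2.2 = 1 then
        (fusedFamily A f i * fusedFamily A f j) hc.choose.2.1 hc.choose.2.2
      else 0, ?_⟩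
    ext x y
    obtain ⟨k₀, hk₀⟩ := exists_rel hAsum hA01 x y
    have ho := others_zero hAsum hA01 hk₀
    rw [Matrix.sum_apply, Finset.sum_eq_single (f k₀)]
    rotate_left
    · intro c _ hc
      rw [Matrix.smul_apply, fused_apply f hk₀ ho c, if_neg (fun h' => hc h'.symm),
        smul_zero]
    · exact fun hm => absurd (Finset.mem_univ _) hm
    rw [Matrix.smul_apply, fused_apply f hk₀ ho, if_pos rfl, smul_eq_mul, mul_one]
    have hex : ∃ q : Fin (d + 1) × X × X, f q.1 = f k₀ ∧ A q.1 q.2.1 q.2.2 = 1 :=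
      ⟨⟨k₀, x, y⟩, rfl, hk₀⟩
    beta_reduce
    rw [dif_pos hex]
    obtain ⟨hq1, hq2⟩ := hex.choose_spec
    exact main_const hAS h hf hq1.symm hk₀ hq2 i j
end

section
/- Let d ≥ 2 and let M be an invertible real (d+1)×(d+1) matrix, with rows and columns indexed by {0,1,…,d}, such that M_{j0} = 1 for every j ∈ {0,…,d} and Σ_{i=0}^d M_{ji} = 0 for every j ∈ {1,…,d}. Then for every subset S ⊆ {1,…,d} with |S| = t ≥ 2, there are at least t indices i ∈ {1,…,d} such that the entries M_{ji} for j ∈ S are not all equal. -/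
open Matrix

/-- Let `d ≥ 2` and let `M` be an invertible real `(d+1) × (d+1)` matrix
whose column `0` is all ones and whose rows other than row `0` have zero row sum. Then for
any set `S` of at least two nonzero row indices there are at least `|S|` nonzero column
indices on which the rows of `S` are not all constant. -/
theorem eigenmatrix_nonconstant_columns
    {d : ℕ} (hd : 2 ≤ d) (M : Matrix (Fin (d + 1)) (Fin (d + 1)) ℝ)
    (hM : M.det ≠ 0)
    (h1 : ∀ j, M j 0 = 1)
    (h2 : ∀ j : Fin (d + 1), j ≠ 0 → ∑ i, M j i = 0)
    (S : Finset (Fin (d + 1))) (hS0 : (0 : Fin (d + 1)) ∉ S) (hS : 2 ≤ S.card) :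
    S.card ≤
      {i : Fin (d + 1) | i ≠ 0 ∧ ¬∃ c : ℝ, ∀ j ∈ S, M j i = c}.ncard := by
  classical
  set T : Finset (Fin (d + 1)) :=
    Finset.univ.filter (fun i => i ≠ 0 ∧ ¬∃ c : ℝ, ∀ j ∈ S, M j i = c) with hT
  have hset : {i : Fin (d + 1) | i ≠ 0 ∧ ¬∃ c : ℝ, ∀ j ∈ S, M j i = c} = ↑T := by
    ext i; simp [hT]
  rw [hset, Set.ncard_coe_finset]
  have hrows : LinearIndependent ℝ (fun j => M j) :=
    Matrix.linearIndependent_rows_iff_isUnit.mpr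
      ((Matrix.isUnit_iff_isUnit_det M).mpr (isUnit_iff_ne_zero.mpr hM))
  obtain ⟨j0, hj0, j1, hj1, hne⟩ := Finset.one_lt_card.mp (lt_of_lt_of_le one_lt_two hS)
  have hdiff : ∀ j ∈ S, ∀ i, i ∉ T → M j i - M j0 i = 0 := by
    intro j hj i hi
    simp only [hT, Finset.mem_filter, Finset.mem_univ, true_and, not_and, not_not] at hi
    by_cases h0 : i = 0
    · subst h0; rw [h1, h1]; ring
    · obtain ⟨c, hc⟩ := hi h0
      rw [hc j hj, hc j0 hj0]; ring
  have hTne : T.Nonempty := by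
    by_contra h
    rw [Finset.not_nonempty_iff_eq_empty] at h
    have heq : M j1 = M j0 := by
      funext i
      have := hdiff j1 hj1 i (by simp [h])
      linarith
    exact hne (hrows.injective heq).symm
  obtain ⟨i0, hi0T⟩ := hTne
  set W : Submodule ℝ (Fin (d + 1) → ℝ) :=
    Submodule.span ℝ ↑(T.image fun i => (Pi.single i (1 : ℝ) : Fin (d + 1) → ℝ)) with hW
  have hmemW : ∀ x : Fin (d + 1) → ℝ, (∀ i, i ∉ T → x i = 0) → x ∈ W := by
    intro x hx
    have hxe : x = ∑ i ∈ T, x i • (Pi.single i (1 : ℝ) : Fin (d + 1) → ℝ) := by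
      funext k
      rw [Finset.sum_apply]
      have hcong : ∀ i ∈ T, x i • (Pi.single i (1 : ℝ) : Fin (d + 1) → ℝ) k = if k = i then x k else 0 := by
        intro i _
        by_cases h : k = i
        · subst h; simp
        · simp [Pi.single_apply, h]
      simp only [Pi.smul_apply]
      rw [Finset.sum_congr rfl hcong, Finset.sum_ite_eq T k (fun _ => x k)]
      by_cases hk : k ∈ T
      · simp [hk]
      · simp [hk, hx k hk]
    rw [hxe]
    exact Submodule.sum_mem _ fun i hi => Submodule.smul_mem _ _
      (Submodule.subset_span (by exact Finset.mem_coe.mpr (Finset.mem_image_of_mem _ hi)))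
  -- the family
  set ι := {j // j ∈ S.erase j0} ⊕ Unit with hι
  set g : ι → (Fin (d + 1) → ℝ) :=
    Sum.elim (fun j => M j.1 - M j0) (fun _ => Pi.single i0 1) with hg
  have hgW : ∀ i, g i ∈ W := by
    rintro (j | u)
    · exact hmemW _ fun i hi => hdiff j.1 (Finset.mem_of_mem_erase j.2) i hi
    · exact hmemW _ fun i hi => Pi.single_eq_of_ne (fun h => hi (by rw [h]; exact hi0T)) 1
  have hSsum : ∀ j ∈ S, ∑ i, M j i = 0 := fun j hj => h2 j (fun h => hS0 (h ▸ hj))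
  have hli : LinearIndependent ℝ g := by
    rw [Fintype.linearIndependent_iff]
    intro c hc
    have hg1 : ∀ j : {j // j ∈ S.erase j0}, ∑ u, g (Sum.inl j) u = 0 := by
      intro j
      simp only [hg, Sum.elim_inl, Pi.sub_apply, Finset.sum_sub_distrib]
      rw [hSsum j.1 (Finset.mem_of_mem_erase j.2), hSsum j0 hj0, sub_zero]
    have hg2 : ∀ a : Unit, ∑ u, g (Sum.inr a) u = 1 := by
      intro a
      simp [hg, Pi.single_apply]
    have h0 : ∑ i : ι, c i * (∑ u, g i u) = 0 := by
      have h := congrArg (fun v : Fin (d + 1) → ℝ => ∑ u, v u) hc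
      simp only [Finset.sum_apply, Pi.smul_apply, smul_eq_mul, Pi.zero_apply,
        Finset.sum_const_zero] at h
      rw [Finset.sum_comm] at h
      simpa [Finset.mul_sum] using h
    rw [Fintype.sum_sum_type] at h0
    have hc0 : c (Sum.inr ()) = 0 := by simpa [hg1, hg2] using h0
    -- extend coefficients
    set cext : Fin (d + 1) → ℝ :=
      fun k => if h : k ∈ S.erase j0 then c (Sum.inl ⟨k, h⟩) else 0 with hcext
    have hcev : ∀ j : {j // j ∈ S.erase j0}, cext j.1 = c (Sum.inl j) := by
      intro j
      simp only [hcext]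
      rw [dif_pos j.2]
    have hc2 : ∑ k ∈ S.erase j0, cext k • (M k - M j0) = 0 := by
      rw [← Finset.sum_coe_sort (S.erase j0) (fun k => cext k • (M k - M j0))]
      rw [Fintype.sum_sum_type] at hc
      simp only [hg, Sum.elim_inl, Sum.elim_inr] at hc
      simp only [hcev]
      simpa [hc0] using hc
    have hc3 : ∑ k, cext k • (M k - M j0) = 0 := by
      rw [← Finset.sum_subset (Finset.subset_univ (S.erase j0))]
      · exact hc2
      · intro k _ hk
        simp only [hcext]
        rw [dif_neg hk, zero_smul]
    set s0 : ℝ := ∑ k, cext k with hs0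
    set κ : Fin (d + 1) → ℝ := fun k => cext k - (if k = j0 then s0 else 0) with hκ
    have hκ0 : ∑ k, κ k • M k = 0 := by
      simp only [hκ, sub_smul, ite_smul, zero_smul, Finset.sum_sub_distrib,
        Finset.sum_ite_eq' Finset.univ j0 (fun _ => s0 • M j0), Finset.mem_univ, if_true]
      have := hc3
      simp only [smul_sub, Finset.sum_sub_distrib, sub_eq_zero] at this
      rw [this, ← Finset.sum_smul]
      simp [hs0]
    have hκz : ∀ k, κ k = 0 := Fintype.linearIndependent_iff.mp hrows κ hκ0
    rintro (j | u)
    · have hk := hκz j.1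
      have hjne : j.1 ≠ j0 := Finset.ne_of_mem_erase j.2
      simp only [hκ, hjne, if_neg, if_false] at hk
      rw [← hcev j]
      simpa using hk
    · cases u; exact hc0
  -- cardinality bound
  haveI : Module.Finite ℝ ↥W := by infer_instance
  have hcard : Fintype.card ι ≤ Module.finrank ℝ W := by
    have hli' : LinearIndependent ℝ (fun i => (⟨g i, hgW i⟩ : W)) := by
      apply LinearIndependent.of_comp W.subtype
      exact hli
    exact hli'.fintype_card_le_finrank
  have hcardι : Fintype.card ι = S.card := by
    have h1' : 1 ≤ S.card := le_trans one_le_two hS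
    simp only [hι, Fintype.card_sum, Fintype.card_coe, Fintype.card_unit,
      Finset.card_erase_of_mem hj0]
    omega
  have hWT : Module.finrank ℝ W ≤ T.card := by
    calc Module.finrank ℝ W ≤ (T.image fun i => (Pi.single i (1 : ℝ) : Fin (d + 1) → ℝ)).card :=
          finrank_span_finset_le_card _
      _ ≤ T.card := Finset.card_image_le
  omega
end

section
/- Let Γ_1 and Γ_2 be edge-disjoint strongly regular graphs on a common vertex set V of size v, with adjacency matrices A_1 and A_2 satisfying A_1 A_2 = A_2 A_1. For i = 1, 2 let k_i be the valency of Γ_i and let a_i, b_i (a_i ≠ b_i) be its restricted eigenvalues. For θ ∈ {a_1, b_1} and η ∈ {a_2, b_2} let W(θ,η) = {x ∈ ℝ^V : Σ_{u∈V} x_u = 0, A_1 x = θx, A_2 x = ηx}. Then dim W(a_1,a_2) = (v b_1 b_2 − (k_1−b_1)(k_2−b_2)) / ((a_1−b_1)(a_2−b_2)), dim W(a_1,b_2) = −(v b_1 a_2 − (k_1−b_1)(k_2−a_2)) / ((a_1−b_1)(a_2−b_2)), dim W(b_1,a_2) = −(v a_1 b_2 − (k_1−a_1)(k_2−b_2))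 / ((a_1−b_1)(a_2−b_2)), and dim W(b_1,b_2) = (v a_1 a_2 − (k_1−a_1)(k_2−a_2)) / ((a_1−b_1)(a_2−b_2)). Moreover, if a_i > b_i for i = 1, 2, then dim W(a_1,b_2) > 0 and dim W(b_1,a_2) > 0. -/
open Matrix

section RailwayAux

variable {X : Type*} [Fintype X] [DecidableEq X]

omit [DecidableEq X] in
lemma allOnes_mul_allOnes : allOnes X * allOnes X = (Fintype.card X : ℝ) • allOnes X := by
  ext x y; simp [allOnes, Matrix.mul_apply, Finset.card_univ]

omit [DecidableEq X] in
lemma trace_allOnes : (allOnes X).trace = (Fintype.card X : ℝ) := by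
  simp [allOnes, Matrix.trace, Matrix.diag, Finset.card_univ]

lemma trace_mulVecLin (M : Matrix X X ℝ) :
    LinearMap.trace ℝ (X → ℝ) M.mulVecLin = M.trace := by
  rw [LinearMap.trace_eq_matrix_trace ℝ (Pi.basisFun ℝ X), LinearMap.toMatrix_eq_toMatrix',
    ← Matrix.toLin'_apply', LinearMap.toMatrix'_toLin']


section SRG
variable {A : Matrix X X ℝ} {v k l m : ℕ} {a b : ℝ}

lemma vieta (ha : IsRestrictedEig k l m a) (hb : IsRestrictedEig k l m b) (hab : a ≠ b) :
    a + b = (l : ℝ) - m ∧ a * b = (m : ℝ) - k := by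
  unfold IsRestrictedEig at ha hb
  have hsum : a + b = (l : ℝ) - m := by
    have h : (a - b) * (a + b - ((l:ℝ) - m)) = 0 := by linear_combination ha - hb
    rcases mul_eq_zero.1 h with h' | h'
    · exact absurd (sub_eq_zero.1 h') hab
    · linarith
  refine ⟨hsum, ?_⟩
  linear_combination -ha + a * hsum

lemma srg_nonempty (h : IsSRGMatrix A v k l m) : Nonempty X := by
  by_contra hne
  rw [not_nonempty_iff] at hne
  exact h.2.2.2.2.1 (by ext x y; exact isEmptyElim x)

lemma srg_symm_apply (h : IsSRGMatrix A v k l m) (x y : X) : A y x = A x y := by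
  conv_lhs => rw [← h.2.1]
  rfl

lemma srg_rowsum (h : IsSRGMatrix A v k l m) (x : X) : ∑ y, A x y = (k : ℝ) := by
  have e := congrFun (congrFun h.2.2.2.2.2.2 x) x
  rw [Matrix.mul_apply] at e
  have hterm : ∀ z, A x z * A z x = A x z := by
    intro z
    rw [srg_symm_apply h x z]
    rcases h.2.2.2.1 x z with h' | h' <;> rw [h'] <;> ring
  rw [Finset.sum_congr rfl (fun z _ => hterm z)] at e
  simpa [Matrix.add_apply, Matrix.sub_apply, Matrix.smul_apply, Matrix.one_apply, allOnes,
    h.2.2.1 x] using e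

lemma srg_mul_allOnes (h : IsSRGMatrix A v k l m) :
    A * allOnes X = (k : ℝ) • allOnes X := by
  ext x y
  simp [Matrix.mul_apply, allOnes, srg_rowsum h x]

lemma srg_allOnes_mul (h : IsSRGMatrix A v k l m) :
    allOnes X * A = (k : ℝ) • allOnes X := by
  ext x y
  simp only [Matrix.mul_apply, allOnes, Matrix.smul_apply, Matrix.of_apply, one_mul,
    smul_eq_mul, mul_one]
  rw [Finset.sum_congr rfl (fun z _ => srg_symm_apply h y z), srg_rowsum h y]

lemma srg_trace (h : IsSRGMatrix A v k l m) : A.trace = 0 := by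
  simp [Matrix.trace, Matrix.diag, h.2.2.1]

lemma srg_quad (h : IsSRGMatrix A v k l m) (ha : IsRestrictedEig k l m a)
    (hb : IsRestrictedEig k l m b) (hab : a ≠ b) :
    A * A = (a + b) • A - (a * b) • 1 + (m : ℝ) • allOnes X := by
  obtain ⟨hsum, hprod⟩ := vieta ha hb hab
  rw [h.2.2.2.2.2.2, hsum, hprod]
  match_scalars <;> ring

lemma srg_kk (h : IsSRGMatrix A v k l m) (ha : IsRestrictedEig k l m a)
    (hb : IsRestrictedEig k l m b) (hab : a ≠ b) :
    ((k : ℝ) - a) * ((k : ℝ) - b) = (m : ℝ) * (Fintype.card X : ℝ) := by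
  have hne : Nonempty X := srg_nonempty h
  obtain ⟨x0⟩ := hne
  have h1 : (A * A) * allOnes X = ((k:ℝ) * k) • allOnes X := by
    rw [Matrix.mul_assoc, srg_mul_allOnes h, Matrix.mul_smul, srg_mul_allOnes h, smul_smul]
  have h2 : (A * A) * allOnes X
      = ((a + b) * k - a * b + (m : ℝ) * (Fintype.card X : ℝ)) • allOnes X := by
    rw [srg_quad h ha hb hab]
    simp only [Matrix.add_mul, Matrix.sub_mul, Matrix.smul_mul, Matrix.one_mul,
      srg_mul_allOnes h, allOnes_mul_allOnes, smul_smul]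
    match_scalars <;> ring
  have := congrFun (congrFun (h1.symm.trans h2) x0) x0
  simp only [Matrix.smul_apply, allOnes, Matrix.of_apply, smul_eq_mul, mul_one] at this
  linear_combination this

lemma srg_k_one (h : IsSRGMatrix A v k l m) : (1 : ℝ) ≤ (k : ℝ) := by
  obtain ⟨x, y, hxy⟩ : ∃ x y, A x y = 1 := by
    by_contra hc
    push_neg at hc
    exact h.2.2.2.2.1 (by
      ext x y
      rcases h.2.2.2.1 x y with h' | h'
      · exact h'
      · exact absurd h' (hc x y))
  rw [← srg_rowsum h x]
  calc (1 : ℝ) = A x y := hxy.symm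
    _ ≤ ∑ z, A x z := Finset.single_le_sum (f := fun z => A x z)
        (fun z _ => by rcases h.2.2.2.1 x z with h' | h' <;> simp [h'])
        (Finset.mem_univ y)

lemma srg_m_le_k (h : IsSRGMatrix A v k l m) : (m : ℝ) ≤ (k : ℝ) := by
  obtain ⟨x, y, hxy⟩ : ∃ x y, x ≠ y ∧ A x y = 0 := by
    by_contra hc
    push_neg at hc
    apply h.2.2.2.2.2.1
    ext x y
    by_cases hxy : x = y
    · subst hxy
      simp [allOnes, h.2.2.1 x, Matrix.sub_apply, Matrix.one_apply]
    · rcases h.2.2.2.1 x y with h' | h'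
      · exact absurd h' (hc x y hxy)
      · simp [allOnes, h', Matrix.sub_apply, Matrix.one_apply, hxy]
  obtain ⟨hne, hxy0⟩ := hxy
  have e := congrFun (congrFun h.2.2.2.2.2.2 x) y
  rw [Matrix.mul_apply] at e
  simp only [Matrix.add_apply, Matrix.sub_apply, Matrix.smul_apply, Matrix.one_apply,
    allOnes, Matrix.of_apply, hxy0, if_neg hne, smul_eq_mul, mul_zero, mul_one, add_zero,
    zero_add, mul_sub, sub_zero] at e
  have hbound : ∑ z, A x z * A z y ≤ ∑ z, A x z := by
    apply Finset.sum_le_sum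
    intro z _
    rcases h.2.2.2.1 x z with h' | h' <;> rcases h.2.2.2.1 z y with h'' | h'' <;>
      simp [h', h'']
  rw [srg_rowsum h x] at hbound
  calc (m : ℝ) = ∑ z, A x z * A z y := by linarith [e]
    _ ≤ (k : ℝ) := hbound

lemma srg_l_lt_k (h : IsSRGMatrix A v k l m) : (l : ℝ) + 1 ≤ (k : ℝ) := by
  obtain ⟨x, y, hxy⟩ : ∃ x y, A x y = 1 := by
    by_contra hc
    push_neg at hc
    exact h.2.2.2.2.1 (by
      ext x y
      rcases h.2.2.2.1 x y with h' | h'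
      · exact h'
      · exact absurd h' (hc x y))
  have hne : x ≠ y := by
    intro he
    rw [he, h.2.2.1 y] at hxy
    norm_num at hxy
  have e := congrFun (congrFun h.2.2.2.2.2.2 x) y
  rw [Matrix.mul_apply] at e
  simp only [Matrix.add_apply, Matrix.sub_apply, Matrix.smul_apply, Matrix.one_apply,
    allOnes, Matrix.of_apply, hxy, if_neg hne, smul_eq_mul, mul_zero, mul_one, add_zero,
    zero_add, mul_sub, sub_zero] at e
  have e' : ∑ z, A x z * A z y = (l : ℝ) := by linarith [e]
  have hsplit : ∑ z, A x z = A x y + ∑ z ∈ Finset.univ.erase y, A x z := by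
    rw [Finset.add_sum_erase _ _ (Finset.mem_univ y)]
  have hzero : A x y * A y y = 0 := by rw [h.2.2.1 y, mul_zero]
  have hbound : ∑ z, A x z * A z y ≤ ∑ z ∈ Finset.univ.erase y, A x z := by
    rw [← Finset.add_sum_erase _ (fun z => A x z * A z y) (Finset.mem_univ y), hzero, zero_add]
    apply Finset.sum_le_sum
    intro z _
    rcases h.2.2.2.1 x z with h' | h' <;> rcases h.2.2.2.1 z y with h'' | h'' <;>
      simp [h', h'']
  have hrs := srg_rowsum h x
  rw [hsplit, hxy] at hrs
  rw [e'] at hbound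
  linarith

end SRG

omit [DecidableEq X] in
lemma mem_res {A1 A2 : Matrix X X ℝ} {t e : ℝ} {x : X → ℝ} :
    x ∈ restrictedEigenspace A1 A2 t e ↔
      (∑ u, x u = 0) ∧ A1 *ᵥ x = t • x ∧ A2 *ᵥ x = e • x := by
  simp [restrictedEigenspace, Submodule.mem_inf, LinearMap.mem_ker, sub_eq_zero, sumLin,
    LinearMap.sub_apply, LinearMap.smul_apply, LinearMap.id_apply, Matrix.mulVecLin_apply,
    and_assoc]

lemma dim_eq [Nonempty X] (A1 A2 : Matrix X X ℝ) (k1 k2 θ1 σ1 θ2 σ2 m1 m2 : ℝ)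
    (hreg1 : A1 * allOnes X = k1 • allOnes X) (hreg1' : allOnes X * A1 = k1 • allOnes X)
    (hreg2 : A2 * allOnes X = k2 • allOnes X) (hreg2' : allOnes X * A2 = k2 • allOnes X)
    (hq1 : A1 * A1 = (θ1+σ1) • A1 - (θ1*σ1) • 1 + m1 • allOnes X)
    (hq2 : A2 * A2 = (θ2+σ2) • A2 - (θ2*σ2) • 1 + m2 • allOnes X)
    (hcomm : A1 * A2 = A2 * A1)
    (htr1 : A1.trace = 0) (htr2 : A2.trace = 0) (htr12 : (A1 * A2).trace = 0)
    (hne1 : θ1 ≠ σ1) (hne2 : θ2 ≠ σ2)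
    (hkk1 : (k1 - θ1) * (k1 - σ1) = m1 * (Fintype.card X : ℝ))
    (hkk2 : (k2 - θ2) * (k2 - σ2) = m2 * (Fintype.card X : ℝ)) :
    (Module.finrank ℝ (restrictedEigenspace A1 A2 θ1 θ2) : ℝ)
      = ((Fintype.card X : ℝ) * σ1 * σ2 - (k1 - σ1) * (k2 - σ2)) / ((θ1 - σ1) * (θ2 - σ2)) := by
  have hn : (Fintype.card X : ℝ) ≠ 0 := Nat.cast_ne_zero.2 Fintype.card_ne_zero
  set n : ℝ := (Fintype.card X : ℝ) with hnn
  obtain ⟨c1, hc1⟩ : ∃ c : ℝ, c * n = k1 - σ1 := ⟨(k1 - σ1) / n, div_mul_cancel₀ _ hn⟩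
  obtain ⟨c2, hc2⟩ : ∃ c : ℝ, c * n = k2 - σ2 := ⟨(k2 - σ2) / n, div_mul_cancel₀ _ hn⟩
  have hm1 : m1 = c1 * (k1 - θ1) := by
    have h : (m1 - c1 * (k1 - θ1)) * n = 0 := by linear_combination -hkk1 - (k1 - θ1) * hc1
    rcases mul_eq_zero.1 h with h' | h'
    · linarith
    · exact absurd h' hn
  have hm2 : m2 = c2 * (k2 - θ2) := by
    have h : (m2 - c2 * (k2 - θ2)) * n = 0 := by linear_combination -hkk2 - (k2 - θ2) * hc2
    rcases mul_eq_zero.1 h with h' | h'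
    · linarith
    · exact absurd h' hn
  have hk1' : k1 = c1 * n + σ1 := by linarith
  have hk2' : k2 = c2 * n + σ2 := by linarith
  rw [hm1, hk1'] at hq1
  rw [hm2, hk2'] at hq2
  rw [hk1'] at hreg1 hreg1'
  rw [hk2'] at hreg2 hreg2'
  set M1 : Matrix X X ℝ := A1 - σ1 • 1 - c1 • allOnes X with hM1
  set M2 : Matrix X X ℝ := A2 - σ2 • 1 - c2 • allOnes X with hM2
  have hAM1 : A1 * M1 = θ1 • M1 := by
    rw [hM1]
    simp only [mul_sub, sub_mul, Matrix.mul_smul, Matrix.smul_mul, Matrix.mul_one,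
      Matrix.one_mul, hq1, hreg1, hreg1', allOnes_mul_allOnes, smul_smul, smul_sub, smul_add]
    try match_scalars <;> ring
  have hAM2 : A2 * M2 = θ2 • M2 := by
    rw [hM2]
    simp only [mul_sub, sub_mul, Matrix.mul_smul, Matrix.smul_mul, Matrix.mul_one,
      Matrix.one_mul, hq2, hreg2, hreg2', allOnes_mul_allOnes, smul_smul, smul_sub, smul_add]
    try match_scalars <;> ring
  have hJM1 : allOnes X * M1 = 0 := by
    rw [hM1]
    simp only [mul_sub, Matrix.mul_smul, Matrix.mul_one, hreg1', allOnes_mul_allOnes, smul_smul]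
    try match_scalars <;> ring
  have hJM2 : allOnes X * M2 = 0 := by
    rw [hM2]
    simp only [mul_sub, Matrix.mul_smul, Matrix.mul_one, hreg2', allOnes_mul_allOnes, smul_smul]
    try match_scalars <;> ring
  have hM1M1 : M1 * M1 = (θ1 - σ1) • M1 := by
    rw [hM1]
    simp only [mul_sub, sub_mul, Matrix.mul_smul, Matrix.smul_mul, Matrix.mul_one,
      Matrix.one_mul, hq1, hreg1, hreg1', allOnes_mul_allOnes, smul_smul, smul_sub, smul_add]
    try match_scalars <;> ring
  have hM2M2 : M2 * M2 = (θ2 - σ2) • M2 := by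
    rw [hM2]
    simp only [mul_sub, sub_mul, Matrix.mul_smul, Matrix.smul_mul, Matrix.mul_one,
      Matrix.one_mul, hq2, hreg2, hreg2', allOnes_mul_allOnes, smul_smul, smul_sub, smul_add]
    try match_scalars <;> ring
  have hM1M2comm : M1 * M2 = M2 * M1 := by
    rw [hM1, hM2]
    simp only [mul_sub, sub_mul, Matrix.mul_smul, Matrix.smul_mul, Matrix.mul_one,
      Matrix.one_mul, hcomm, hreg1, hreg1', hreg2, hreg2', allOnes_mul_allOnes, smul_smul]
    try match_scalars <;> ring
  have hA2M1 : A2 * M1 = M1 * A2 := by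
    rw [hM1]
    simp only [mul_sub, sub_mul, Matrix.mul_smul, Matrix.smul_mul, Matrix.mul_one,
      Matrix.one_mul, hcomm, hreg2, hreg2', smul_smul]
    try match_scalars <;> ring
  set d : ℝ := (θ1 - σ1) * (θ2 - σ2) with hd
  have hdne : d ≠ 0 := mul_ne_zero (sub_ne_zero.2 hne1) (sub_ne_zero.2 hne2)
  have key : M1 * M2 * (M1 * M2) = d • (M1 * M2) := by
    calc M1 * M2 * (M1 * M2) = M1 * (M2 * M1 * M2) := by rw [mul_assoc, mul_assoc]
      _ = M1 * (M1 * M2 * M2) := by rw [← hM1M2comm]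
      _ = M1 * M1 * (M2 * M2) := by rw [← mul_assoc, ← mul_assoc, mul_assoc]
      _ = ((θ1 - σ1) • M1) * ((θ2 - σ2) • M2) := by rw [hM1M1, hM2M2]
      _ = d • (M1 * M2) := by
          rw [Matrix.smul_mul, Matrix.mul_smul, smul_smul, hd]
  set P : Matrix X X ℝ := d⁻¹ • (M1 * M2) with hP
  have hPP : P * P = P := by
    rw [hP, Matrix.smul_mul, Matrix.mul_smul, smul_smul, key, smul_smul]
    congr 1
    field_simp
  have hA1P : A1 * (M1 * M2) = θ1 • (M1 * M2) := by
    rw [← mul_assoc, hAM1, Matrix.smul_mul]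
  have hA2P : A2 * (M1 * M2) = θ2 • (M1 * M2) := by
    rw [← mul_assoc, hA2M1, mul_assoc, hAM2, Matrix.mul_smul]
  have hJP : allOnes X * (M1 * M2) = 0 := by
    rw [← mul_assoc, hJM1, Matrix.zero_mul]
  have hcolsum : ∀ w, ∑ u, (M1 * M2) u w = 0 := by
    intro w
    obtain ⟨x0⟩ := ‹Nonempty X›
    have := congrFun (congrFun hJP x0) w
    simpa [Matrix.mul_apply, allOnes] using this
  set f : (X → ℝ) →ₗ[ℝ] (X → ℝ) := P.mulVecLin with hf
  have hff : ∀ x, f (f x) = f x := by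
    intro x
    rw [hf, Matrix.mulVecLin_apply, Matrix.mulVecLin_apply, Matrix.mulVec_mulVec, hPP]
  have hsmul1 : (θ1 - σ1) • ((θ2 - σ2) • (d⁻¹ • (1:ℝ))) = 1 := by
    simp only [smul_eq_mul, hd]
    field_simp
  have hrange : restrictedEigenspace A1 A2 θ1 θ2 = LinearMap.range f := by
    apply le_antisymm
    · intro x hx
      rw [mem_res] at hx
      obtain ⟨hsum, hx1, hx2⟩ := hx
      have hJx : allOnes X *ᵥ x = 0 := by
        ext u; simp [Matrix.mulVec, dotProduct, allOnes, hsum]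
      have h2 : M2 *ᵥ x = (θ2 - σ2) • x := by
        rw [hM2, Matrix.sub_mulVec, Matrix.sub_mulVec, Matrix.smul_mulVec,
          Matrix.smul_mulVec, Matrix.one_mulVec, hJx, hx2, smul_zero, sub_zero, sub_smul]
      have h1 : M1 *ᵥ x = (θ1 - σ1) • x := by
        rw [hM1, Matrix.sub_mulVec, Matrix.sub_mulVec, Matrix.smul_mulVec,
          Matrix.smul_mulVec, Matrix.one_mulVec, hJx, hx1, smul_zero, sub_zero, sub_smul]
      refine ⟨x, ?_⟩
      rw [hf, Matrix.mulVecLin_apply, hP, Matrix.smul_mulVec, ← Matrix.mulVec_mulVec,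
        h2, Matrix.mulVec_smul, h1]
      rw [smul_smul, smul_smul]
      rw [show d⁻¹ * (θ2 - σ2) * (θ1 - σ1) = 1 by
        rw [hd]
        have s1 : θ1 - σ1 ≠ 0 := sub_ne_zero.2 hne1
        have s2 : θ2 - σ2 ≠ 0 := sub_ne_zero.2 hne2
        field_simp]
      rw [one_smul]
    · rintro _ ⟨x, rfl⟩
      rw [mem_res]
      set y : X → ℝ := (M1 * M2) *ᵥ x with hy
      have hfx : f x = d⁻¹ • y := by
        rw [hf, Matrix.mulVecLin_apply, hP, Matrix.smul_mulVec]
      have hys : ∑ u, y u = 0 := by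
        rw [hy]
        simp only [Matrix.mulVec, dotProduct]
        rw [Finset.sum_comm]
        simp only [← Finset.sum_mul]
        simp [hcolsum]
      have hy1 : A1 *ᵥ y = θ1 • y := by
        rw [hy, Matrix.mulVec_mulVec, hA1P, Matrix.smul_mulVec]
      have hy2 : A2 *ᵥ y = θ2 • y := by
        rw [hy, Matrix.mulVec_mulVec, hA2P, Matrix.smul_mulVec]
      refine ⟨?_, ?_, ?_⟩
      · rw [hfx]
        simp only [Pi.smul_apply, smul_eq_mul, ← Finset.mul_sum, hys, mul_zero]
      · rw [hfx, Matrix.mulVec_smul, hy1, smul_comm]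
      · rw [hfx, Matrix.mulVec_smul, hy2, smul_comm]
  have hproj : LinearMap.IsProj (LinearMap.range f) f := by
    constructor
    · intro x
      exact LinearMap.mem_range_self f x
    · rintro _ ⟨x, rfl⟩
      exact hff x
  have htrf := hproj.trace
  rw [trace_mulVecLin] at htrf
  have htrM : (M1 * M2).trace = n * σ1 * σ2 - (c1 * n) * (c2 * n) := by
    rw [hM1, hM2]
    simp only [mul_sub, sub_mul, Matrix.mul_smul, Matrix.smul_mul, Matrix.mul_one,
      Matrix.one_mul, hreg1, hreg1', hreg2, hreg2', allOnes_mul_allOnes, smul_smul,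
      Matrix.trace_sub, Matrix.trace_add, Matrix.trace_smul, Matrix.trace_one,
      trace_allOnes, htr1, htr2, htr12, smul_eq_mul, Finset.card_univ]
    ring
  rw [hrange, ← htrf, hP, Matrix.trace_smul, htrM, smul_eq_mul, hk1', hk2']
  field_simp
  try ring

lemma sign_facts {A : Matrix X X ℝ} {v k l m : ℕ} {a b : ℝ} (h : IsSRGMatrix A v k l m)
    (ha : IsRestrictedEig k l m a) (hb : IsRestrictedEig k l m b) (hba : b < a) :
    b < 0 ∧ 0 ≤ a ∧ a ≤ (k : ℝ) := by
  obtain ⟨hsum, hprod⟩ := vieta ha hb hba.ne'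
  have hk1 := srg_k_one h
  have hm := srg_m_le_k h
  have hl := srg_l_lt_k h
  have hkk := srg_kk h ha hb hba.ne'
  have hm0 : (0:ℝ) ≤ (m:ℝ) := Nat.cast_nonneg m
  have hv1 : (1:ℝ) ≤ (Fintype.card X : ℝ) := by
    have : Nonempty X := srg_nonempty h
    exact_mod_cast Fintype.card_pos
  have hb0 : b < 0 := by
    by_contra hge
    push_neg at hge
    have ha' : 0 ≤ a := le_trans hge hba.le
    have h1 : 0 ≤ a * b := mul_nonneg ha' hge
    nlinarith
  have ha0 : 0 ≤ a := by
    by_contra h'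
    push_neg at h'
    have h1 : 0 < a * b := mul_pos_of_neg_of_neg h' hb0
    linarith
  refine ⟨hb0, ha0, ?_⟩
  by_contra h'
  push_neg at h'
  have h1 : (0:ℝ) < (k:ℝ) - b := by linarith
  have h2 : ((k:ℝ) - a) * ((k:ℝ) - b) < 0 := mul_neg_of_neg_of_pos (by linarith) h1
  have h3 : (0:ℝ) ≤ (m:ℝ) * (Fintype.card X : ℝ) := mul_nonneg hm0 (by linarith)
  linarith [hkk ▸ h2]


end RailwayAux

set_option maxHeartbeats 1600000 in
/-- (Lemma 2 of van Dam, "railway lemma".) Dimensions of the common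
restricted eigenspaces of two edge-disjoint commuting strongly regular graphs. -/
theorem railway_lemma
    {X : Type*} [Fintype X] [DecidableEq X] (A1 A2 : Matrix X X ℝ)
    (v k1 l1 m1 k2 l2 m2 : ℕ) (a1 b1 a2 b2 : ℝ)
    (h1 : IsSRGMatrix A1 v k1 l1 m1) (h2 : IsSRGMatrix A2 v k2 l2 m2)
    (hdisj : ∀ x y, A1 x y * A2 x y = 0)
    (hcomm : A1 * A2 = A2 * A1)
    (ha1 : IsRestrictedEig k1 l1 m1 a1) (hb1 : IsRestrictedEig k1 l1 m1 b1)
    (hab1 : a1 ≠ b1)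
    (ha2 : IsRestrictedEig k2 l2 m2 a2) (hb2 : IsRestrictedEig k2 l2 m2 b2)
    (hab2 : a2 ≠ b2) :
    ((Module.finrank ℝ ↥(restrictedEigenspace A1 A2 a1 a2) : ℝ) =
        ((v : ℝ) * b1 * b2 - ((k1 : ℝ) - b1) * ((k2 : ℝ) - b2)) /
          ((a1 - b1) * (a2 - b2))) ∧
    ((Module.finrank ℝ ↥(restrictedEigenspace A1 A2 a1 b2) : ℝ) =
        -(((v : ℝ) * b1 * a2 - ((k1 : ℝ) - b1) * ((k2 : ℝ) - a2)) /
          ((a1 - b1) * (a2 - b2)))) ∧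
    ((Module.finrank ℝ ↥(restrictedEigenspace A1 A2 b1 a2) : ℝ) =
        -(((v : ℝ) * a1 * b2 - ((k1 : ℝ) - a1) * ((k2 : ℝ) - b2)) /
          ((a1 - b1) * (a2 - b2)))) ∧
    ((Module.finrank ℝ ↥(restrictedEigenspace A1 A2 b1 b2) : ℝ) =
        ((v : ℝ) * a1 * a2 - ((k1 : ℝ) - a1) * ((k2 : ℝ) - a2)) /
          ((a1 - b1) * (a2 - b2))) ∧
    (b1 < a1 → b2 < a2 →
      0 < Module.finrank ℝ ↥(restrictedEigenspace A1 A2 a1 b2) ∧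
      0 < Module.finrank ℝ ↥(restrictedEigenspace A1 A2 b1 a2)) := by
  have hX : Nonempty X := srg_nonempty h1
  have hreg1 := srg_mul_allOnes h1
  have hreg1' := srg_allOnes_mul h1
  have hreg2 := srg_mul_allOnes h2
  have hreg2' := srg_allOnes_mul h2
  have hq1 := srg_quad h1 ha1 hb1 hab1
  have hq1' := srg_quad h1 hb1 ha1 (Ne.symm hab1)
  have hq2 := srg_quad h2 ha2 hb2 hab2
  have hq2' := srg_quad h2 hb2 ha2 (Ne.symm hab2)
  have htr1 := srg_trace h1
  have htr2 := srg_trace h2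
  have htr12 : (A1 * A2).trace = 0 := by
    simp only [Matrix.trace, Matrix.diag, Matrix.mul_apply]
    apply Finset.sum_eq_zero
    intro x _
    apply Finset.sum_eq_zero
    intro y _
    rw [srg_symm_apply h2 x y]
    exact hdisj x y
  have hkk1 := srg_kk h1 ha1 hb1 hab1
  have hkk1' := srg_kk h1 hb1 ha1 (Ne.symm hab1)
  have hkk2 := srg_kk h2 ha2 hb2 hab2
  have hkk2' := srg_kk h2 hb2 ha2 (Ne.symm hab2)
  have e1 := dim_eq A1 A2 k1 k2 a1 b1 a2 b2 m1 m2 hreg1 hreg1' hreg2 hreg2' hq1 hq2 hcomm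
    htr1 htr2 htr12 hab1 hab2 hkk1 hkk2
  have e2 := dim_eq A1 A2 k1 k2 a1 b1 b2 a2 m1 m2 hreg1 hreg1' hreg2 hreg2' hq1 hq2' hcomm
    htr1 htr2 htr12 hab1 (Ne.symm hab2) hkk1 hkk2'
  have e3 := dim_eq A1 A2 k1 k2 b1 a1 a2 b2 m1 m2 hreg1 hreg1' hreg2 hreg2' hq1' hq2 hcomm
    htr1 htr2 htr12 (Ne.symm hab1) hab2 hkk1' hkk2
  have e4 := dim_eq A1 A2 k1 k2 b1 a1 b2 a2 m1 m2 hreg1 hreg1' hreg2 hreg2' hq1' hq2' hcomm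
    htr1 htr2 htr12 (Ne.symm hab1) (Ne.symm hab2) hkk1' hkk2'
  rw [h1.1] at e1 e2 e3 e4
  have d1 : a1 - b1 ≠ 0 := sub_ne_zero.2 hab1
  have d2 : a2 - b2 ≠ 0 := sub_ne_zero.2 hab2
  have d1' : b1 - a1 ≠ 0 := sub_ne_zero.2 (Ne.symm hab1)
  have d2' : b2 - a2 ≠ 0 := sub_ne_zero.2 (Ne.symm hab2)
  have e2' : (Module.finrank ℝ ↥(restrictedEigenspace A1 A2 a1 b2) : ℝ) =
      -(((v : ℝ) * b1 * a2 - ((k1 : ℝ) - b1) * ((k2 : ℝ) - a2)) /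
        ((a1 - b1) * (a2 - b2))) := by
    rw [e2, show (a1 - b1) * (b2 - a2) = -((a1 - b1) * (a2 - b2)) from by ring, div_neg]
  have e3' : (Module.finrank ℝ ↥(restrictedEigenspace A1 A2 b1 a2) : ℝ) =
      -(((v : ℝ) * a1 * b2 - ((k1 : ℝ) - a1) * ((k2 : ℝ) - b2)) /
        ((a1 - b1) * (a2 - b2))) := by
    rw [e3, show (b1 - a1) * (a2 - b2) = -((a1 - b1) * (a2 - b2)) from by ring, div_neg]
  have e4' : (Module.finrank ℝ ↥(restrictedEigenspace A1 A2 b1 b2) : ℝ) =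
      ((v : ℝ) * a1 * a2 - ((k1 : ℝ) - a1) * ((k2 : ℝ) - a2)) /
        ((a1 - b1) * (a2 - b2)) := by
    rw [e4, show (b1 - a1) * (b2 - a2) = (a1 - b1) * (a2 - b2) from by ring]
  refine ⟨e1, e2', e3', e4', ?_⟩
  intro hba1 hba2
  obtain ⟨hb1neg, ha1nn, ha1k⟩ := sign_facts h1 ha1 hb1 hba1
  obtain ⟨hb2neg, ha2nn, ha2k⟩ := sign_facts h2 ha2 hb2 hba2
  have hk11 := srg_k_one h1
  have hk21 := srg_k_one h2
  have hv1 : (1:ℝ) ≤ (v:ℝ) := by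
    rw [← h1.1]
    exact_mod_cast Fintype.card_pos
  have hD : 0 < (a1 - b1) * (a2 - b2) := mul_pos (by linarith) (by linarith)
  have hN2 : 0 < ((k1:ℝ) - b1) * ((k2:ℝ) - a2) - (v:ℝ) * b1 * a2 := by
    rcases eq_or_lt_of_le ha2nn with hz | hpos
    · have hz' : a2 = 0 := hz.symm
      have hzz : (v:ℝ) * b1 * a2 = 0 := by rw [hz', mul_zero]
      have hkb : ((k1:ℝ) - b1) * ((k2:ℝ) - a2) > 0 :=
        mul_pos (by linarith) (by rw [hz', sub_zero]; linarith)
      linarith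
    · have h1' : 0 < (v:ℝ) * (-b1) * a2 :=
        mul_pos (mul_pos (by linarith) (by linarith)) hpos
      have h2' : 0 ≤ ((k1:ℝ) - b1) * ((k2:ℝ) - a2) :=
        mul_nonneg (by linarith) (by linarith)
      nlinarith
  have hN3 : 0 < ((k1:ℝ) - a1) * ((k2:ℝ) - b2) - (v:ℝ) * a1 * b2 := by
    rcases eq_or_lt_of_le ha1nn with hz | hpos
    · have hz' : a1 = 0 := hz.symm
      have hzz : (v:ℝ) * a1 * b2 = 0 := by rw [hz', mul_zero, zero_mul]
      have hkb : ((k1:ℝ) - a1) * ((k2:ℝ) - b2) > 0 :=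
        mul_pos (by rw [hz', sub_zero]; linarith) (by linarith)
      linarith
    · have h1' : 0 < (v:ℝ) * a1 * (-b2) :=
        mul_pos (mul_pos (by linarith) hpos) (by linarith)
      have h2' : 0 ≤ ((k1:ℝ) - a1) * ((k2:ℝ) - b2) :=
        mul_nonneg (by linarith) (by linarith)
      nlinarith
  constructor
  · have hpos : (0:ℝ) < (Module.finrank ℝ ↥(restrictedEigenspace A1 A2 a1 b2) : ℝ) := by
      rw [e2', show -(((v:ℝ) * b1 * a2 - ((k1:ℝ) - b1) * ((k2:ℝ) - a2)) /
          ((a1 - b1) * (a2 - b2)))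
        = (((k1:ℝ) - b1) * ((k2:ℝ) - a2) - (v:ℝ) * b1 * a2) / ((a1 - b1) * (a2 - b2))
        from by ring]
      exact div_pos hN2 hD
    exact_mod_cast hpos
  · have hpos : (0:ℝ) < (Module.finrank ℝ ↥(restrictedEigenspace A1 A2 b1 a2) : ℝ) := by
      rw [e3', show -(((v:ℝ) * a1 * b2 - ((k1:ℝ) - a1) * ((k2:ℝ) - b2)) /
          ((a1 - b1) * (a2 - b2)))
        = (((k1:ℝ) - a1) * ((k2:ℝ) - b2) - (v:ℝ) * a1 * b2) / ((a1 - b1) * (a2 - b2))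
        from by ring]
      exact div_pos hN3 hD
    exact_mod_cast hpos
end

section
/- Let Γ_1 and Γ_2 be edge-disjoint strongly regular graphs on a common vertex set V of size n², both of Latin square type with parameters t_1 and t_2 respectively (so Γ_i has valency t_i(n−1) and restricted eigenvalues n−t_i and −t_i), or both of negative Latin square type with parameters t_1 and t_2 (with n, t_1, t_2 negative integers), and suppose their adjacency matrices A_1 and A_2 commute. Then there is no nonzero vector x ∈ ℝ^V with Σ_{u∈V} x_u = 0 such that A_1 x = (n−t_1)x and A_2 x = (n−t_2)x; that is, Γ_1 and Γ_2 do not share a restricted eigenvector for their positive (respectively negative) restricted eigenvalues. -/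
open Matrix

section Aux
variable {X : Type*} [Fintype X] [DecidableEq X]

lemma aux_reg (A : Matrix X X ℝ) (k l m : ℕ)
    (h : IsSRGMatrix A (Fintype.card X) k l m) : ∀ a, ∑ b, A a b = (k : ℝ) := by
  obtain ⟨-, hsym, hdiag, h01, -, -, heq⟩ := h
  intro a
  have h2 := congrFun (congrFun heq a) a
  simp only [Matrix.mul_apply, Matrix.add_apply, Matrix.smul_apply, Matrix.sub_apply,
    Matrix.one_apply_eq, hdiag, allOnes, Matrix.of_apply, smul_eq_mul] at h2
  have : ∀ b, A a b * A b a = A a b := by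
    intro b
    rw [hsym.apply a b]
    rcases h01 a b with h | h <;> rw [h] <;> ring
  rw [Finset.sum_congr rfl (fun b _ => this b)] at h2
  rw [h2]; ring

lemma aux_AJ (A : Matrix X X ℝ) (k l m : ℕ)
    (h : IsSRGMatrix A (Fintype.card X) k l m) :
    A * allOnes X = (k : ℝ) • allOnes X := by
  ext a b
  simp [Matrix.mul_apply, allOnes, aux_reg A k l m h a]

lemma aux_JA (A : Matrix X X ℝ) (k l m : ℕ)
    (h : IsSRGMatrix A (Fintype.card X) k l m) :
    allOnes X * A = (k : ℝ) • allOnes X := by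
  ext a b
  have : ∀ c, A c b = A b c := fun c => (h.2.1.apply c b).symm ▸ rfl
  simp only [Matrix.mul_apply, allOnes, Matrix.of_apply, one_mul, Matrix.smul_apply,
    smul_eq_mul, mul_one]
  rw [Finset.sum_congr rfl (fun c _ => (h.2.1.apply b c))]
  exact aux_reg A k l m h b

lemma aux_JJ : (allOnes X) * allOnes X = ((Fintype.card X : ℝ)) • allOnes X := by
  ext a b; simp [Matrix.mul_apply, allOnes, Finset.card_univ]

lemma aux_sq (A : Matrix X X ℝ) (k l m : ℕ)
    (h : IsSRGMatrix A (Fintype.card X) k l m) :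
    A * A = ((k : ℝ) - m) • (1 : Matrix X X ℝ) + ((l : ℝ) - m) • A + (m : ℝ) • allOnes X := by
  rw [h.2.2.2.2.2.2]; module

end Aux

/-- Two edge-disjoint commuting strongly regular graphs of the same
(Latin square or negative Latin square) type on `n²` vertices, with parameters `t1` and
`t2`, do not share a restricted eigenvector for the eigenvalues `n - t1` and `n - t2`. -/
theorem same_type_no_shared_eigenvector
    {X : Type*} [Fintype X] [DecidableEq X] (A1 A2 : Matrix X X ℝ)
    (n t1 t2 : ℤ) (k1 l1 m1 k2 l2 m2 : ℕ)
    (hsign : (0 < n ∧ 0 < t1 ∧ 0 < t2) ∨ (n < 0 ∧ t1 < 0 ∧ t2 < 0))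
    (hv : (Fintype.card X : ℤ) = n ^ 2)
    (h1 : IsSRGMatrix A1 (Fintype.card X) k1 l1 m1)
    (hk1 : (k1 : ℤ) = t1 * (n - 1))
    (he1a : IsRestrictedEig k1 l1 m1 ((n : ℝ) - (t1 : ℝ)))
    (he1b : IsRestrictedEig k1 l1 m1 (-(t1 : ℝ)))
    (h2 : IsSRGMatrix A2 (Fintype.card X) k2 l2 m2)
    (hk2 : (k2 : ℤ) = t2 * (n - 1))
    (he2a : IsRestrictedEig k2 l2 m2 ((n : ℝ) - (t2 : ℝ)))
    (he2b : IsRestrictedEig k2 l2 m2 (-(t2 : ℝ)))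
    (hdisj : ∀ x y, A1 x y * A2 x y = 0)
    (hcomm : A1 * A2 = A2 * A1) :
    ¬∃ x : X → ℝ, x ≠ 0 ∧ ∑ u, x u = 0 ∧
      A1.mulVec x = ((n : ℝ) - (t1 : ℝ)) • x ∧
      A2.mulVec x = ((n : ℝ) - (t2 : ℝ)) • x := by
  rintro ⟨x, hx0, hsum, hx1, hx2⟩
  set J := allOnes X with hJdef
  set nn : ℝ := (n : ℝ) with hnn
  set s1 : ℝ := (t1 : ℝ) with hs1
  set s2 : ℝ := (t2 : ℝ) with hs2
  have hn0 : nn ≠ 0 := by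
    have hne : n ≠ 0 := by rcases hsign with ⟨h, -⟩ | ⟨h, -⟩ <;> omega
    simp only [hnn]
    exact_mod_cast hne
  have hvR : ((Fintype.card X : ℕ) : ℝ) = nn ^ 2 := by simp only [hnn]; exact_mod_cast hv
  have hk1R : ((k1 : ℕ) : ℝ) = s1 * (nn - 1) := by simp only [hnn, hs1]; exact_mod_cast hk1
  have hk2R : ((k2 : ℕ) : ℝ) = s2 * (nn - 1) := by simp only [hnn, hs2]; exact_mod_cast hk2
  -- parameter identities
  have e1a : (nn - s1) ^ 2 - ((l1 : ℝ) - m1) * (nn - s1) - ((k1 : ℝ) - m1) = 0 := he1a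
  have e1b : (-s1) ^ 2 - ((l1 : ℝ) - m1) * (-s1) - ((k1 : ℝ) - m1) = 0 := he1b
  have e2a : (nn - s2) ^ 2 - ((l2 : ℝ) - m2) * (nn - s2) - ((k2 : ℝ) - m2) = 0 := he2a
  have e2b : (-s2) ^ 2 - ((l2 : ℝ) - m2) * (-s2) - ((k2 : ℝ) - m2) = 0 := he2b
  have hlm1 : (l1 : ℝ) - m1 = nn - 2 * s1 := by
    have h : ((l1 : ℝ) - m1) * nn = (nn - 2 * s1) * nn := by linear_combination e1b - e1a
    exact mul_right_cancel₀ hn0 h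
  have hkm1 : (k1 : ℝ) - m1 = s1 * nn - s1 ^ 2 := by linear_combination -e1b + s1 * hlm1
  have hlm2 : (l2 : ℝ) - m2 = nn - 2 * s2 := by
    have h : ((l2 : ℝ) - m2) * nn = (nn - 2 * s2) * nn := by linear_combination e2b - e2a
    exact mul_right_cancel₀ hn0 h
  have hkm2 : (k2 : ℝ) - m2 = s2 * nn - s2 ^ 2 := by linear_combination -e2b + s2 * hlm2
  -- matrix identities
  have hA1J : A1 * J = (k1 : ℝ) • J := aux_AJ A1 k1 l1 m1 h1
  have hJA1 : J * A1 = (k1 : ℝ) • J := aux_JA A1 k1 l1 m1 h1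
  have hA2J : A2 * J = (k2 : ℝ) • J := aux_AJ A2 k2 l2 m2 h2
  have hJA2 : J * A2 = (k2 : ℝ) • J := aux_JA A2 k2 l2 m2 h2
  have hJJ : J * J = ((Fintype.card X : ℝ)) • J := aux_JJ
  have hSq1 := aux_sq A1 k1 l1 m1 h1
  have hSq2 := aux_sq A2 k2 l2 m2 h2
  have hm1 : (m1 : ℝ) = s1 ^ 2 - s1 := by linear_combination hk1R - hkm1
  have hm2 : (m2 : ℝ) = s2 ^ 2 - s2 := by linear_combination hk2R - hkm2
  set N1 : Matrix X X ℝ := nn • A1 + (nn * s1) • 1 - s1 • J with hN1def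
  set N2 : Matrix X X ℝ := nn • A2 + (nn * s2) • 1 - s2 • J with hN2def
  have hN1sq : N1 * N1 = (nn ^ 2) • N1 := by
    rw [hN1def]
    simp only [Matrix.add_mul, Matrix.sub_mul, Matrix.mul_add, Matrix.mul_sub,
      Matrix.smul_mul, Matrix.mul_smul, Matrix.one_mul, Matrix.mul_one,
      hSq1, hA1J, hJA1, hJJ, smul_smul, smul_add, smul_sub]
    match_scalars
    · linear_combination nn * nn * hkm1
    · linear_combination nn * nn * hlm1
    · linear_combination nn ^ 2 * hm1 - 2 * nn * s1 * hk1R + s1 ^ 2 * hvR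
  have hN2sq : N2 * N2 = (nn ^ 2) • N2 := by
    rw [hN2def]
    simp only [Matrix.add_mul, Matrix.sub_mul, Matrix.mul_add, Matrix.mul_sub,
      Matrix.smul_mul, Matrix.mul_smul, Matrix.one_mul, Matrix.mul_one,
      hSq2, hA2J, hJA2, hJJ, smul_smul, smul_add, smul_sub]
    match_scalars
    · linear_combination nn * nn * hkm2
    · linear_combination nn * nn * hlm2
    · linear_combination nn ^ 2 * hm2 - 2 * nn * s2 * hk2R + s2 ^ 2 * hvR
  -- traces
  have htrA1 : A1.trace = 0 := by simp [Matrix.trace, Matrix.diag, h1.2.2.1]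
  have htrA2 : A2.trace = 0 := by simp [Matrix.trace, Matrix.diag, h2.2.2.1]
  have htrJ : J.trace = ((Fintype.card X : ℕ) : ℝ) := by
    simp [hJdef, allOnes, Matrix.trace, Matrix.diag, Finset.card_univ]
  have htrA1A2 : (A1 * A2).trace = 0 := by
    simp only [Matrix.trace, Matrix.diag, Matrix.mul_apply]
    refine Finset.sum_eq_zero fun a _ => Finset.sum_eq_zero fun b _ => ?_
    rw [h2.2.1.apply a b]
    exact hdisj a b
  have htrN1N2 : (N1 * N2).trace = 0 := by
    rw [hN1def, hN2def]
    simp only [Matrix.add_mul, Matrix.sub_mul, Matrix.mul_add, Matrix.mul_sub,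
      Matrix.smul_mul, Matrix.mul_smul, Matrix.one_mul, Matrix.mul_one,
      hA1J, hJA2, hJJ, smul_smul]
    simp only [Matrix.trace_add, Matrix.trace_sub, Matrix.trace_smul, Matrix.trace_one,
      htrA1A2, htrA1, htrA2, htrJ, smul_eq_mul, Finset.card_univ, mul_zero]
    rw [hk1R, hk2R, hvR]
    ring
  -- symmetry
  have hJT : Jᵀ = J := by ext a b; simp [hJdef, allOnes]
  have hN1T : N1ᵀ = N1 := by
    rw [hN1def]
    simp [Matrix.transpose_add, Matrix.transpose_sub, Matrix.transpose_smul,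
      Matrix.transpose_one, h1.2.1.eq, hJT]
  have hN2T : N2ᵀ = N2 := by
    rw [hN2def]
    simp [Matrix.transpose_add, Matrix.transpose_sub, Matrix.transpose_smul,
      Matrix.transpose_one, h2.2.1.eq, hJT]
  set B : Matrix X X ℝ := N1 * N2 with hBdef
  have htrBB : (Bᵀ * B).trace = 0 := by
    have hBT : Bᵀ = N2 * N1 := by rw [hBdef, Matrix.transpose_mul, hN1T, hN2T]
    calc (Bᵀ * B).trace = (N2 * (N1 * N1) * N2).trace := by
          rw [hBT, hBdef]; rw [show N2 * N1 * (N1 * N2) = N2 * (N1 * N1) * N2 by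
            simp only [mul_assoc]]
      _ = nn ^ 2 * (N2 * (N1 * N2)).trace := by
          rw [hN1sq, Matrix.mul_smul, Matrix.smul_mul, Matrix.trace_smul, smul_eq_mul,
            mul_assoc]
      _ = nn ^ 2 * (N1 * (N2 * N2)).trace := by rw [Matrix.trace_mul_comm, mul_assoc]
      _ = nn ^ 2 * (nn ^ 2 * (N1 * N2).trace) := by
          rw [hN2sq, Matrix.mul_smul, Matrix.trace_smul, smul_eq_mul]
      _ = 0 := by rw [htrN1N2]; ring
  -- B is nonzero
  have hJx : J *ᵥ x = 0 := by
    ext a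
    simp [hJdef, allOnes, Matrix.mulVec, dotProduct, hsum]
  have hN1x : N1 *ᵥ x = (nn ^ 2) • x := by
    rw [hN1def]
    simp only [Matrix.add_mulVec, Matrix.sub_mulVec, Matrix.smul_mulVec,
      Matrix.one_mulVec, hx1, hJx, smul_zero, sub_zero, smul_smul]
    module
  have hN2x : N2 *ᵥ x = (nn ^ 2) • x := by
    rw [hN2def]
    simp only [Matrix.add_mulVec, Matrix.sub_mulVec, Matrix.smul_mulVec,
      Matrix.one_mulVec, hx2, hJx, smul_zero, sub_zero, smul_smul]
    module
  have hBx : B *ᵥ x = (nn ^ 2 * nn ^ 2) • x := by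
    rw [hBdef, ← Matrix.mulVec_mulVec, hN2x, Matrix.mulVec_smul, hN1x, smul_smul]
  have hBne : B ≠ 0 := by
    intro h
    rw [h, Matrix.zero_mulVec] at hBx
    have hs : (nn ^ 2 * nn ^ 2) ≠ 0 := by positivity
    exact hx0 ((smul_eq_zero_iff_right hs).mp hBx.symm)
  -- contradiction
  have hpos : (Bᵀ * B).trace = ∑ a, ∑ b, (B b a) ^ 2 := by
    simp [Matrix.trace, Matrix.diag, Matrix.mul_apply, Matrix.transpose_apply, sq]
  have h0 : ∑ a : X, ∑ b : X, (B b a) ^ 2 = 0 := by rw [← hpos, htrBB]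
  have hz : ∀ a b : X, B b a = 0 := by
    intro a b
    have h1' := (Finset.sum_eq_zero_iff_of_nonneg
      (fun a _ => Finset.sum_nonneg fun b _ => sq_nonneg (B b a))).1 h0 a (Finset.mem_univ a)
    have h2' := (Finset.sum_eq_zero_iff_of_nonneg
      (fun b _ => sq_nonneg (B b a))).1 h1' b (Finset.mem_univ b)
    exact pow_eq_zero_iff (two_ne_zero) |>.1 h2'
  exact hBne (by ext i j; exact hz j i)
end

section
/- Let Γ_1 and Γ_2 be edge-disjoint strongly regular graphs on a common vertex set of size n², both of Latin square type with parameters t_1 and t_2 respectively (so Γ_i has valency t_i(n−1) and restricted eigenvalues n−t_i and −t_i), or both of negative Latin square type with parameters t_1 and t_2 (with n, t_1, t_2 negative integers), and suppose their adjacency matrices commute. If the union graph, whose adjacency matrix is A_1 + A_2, is not a complete graph, then the union is a strongly regular graph of the same type (Latin square type, respectively negative Latin square type) with parameter t_1 + t_2, i.e., it has valency (t_1+t_2)(n−1) and restricted eigenvalues n−(t_1+t_2) and −(t_1+t_2). -/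
open Matrix

lemma srg_normalize {X : Type*} [Fintype X] [DecidableEq X] (A : Matrix X X ℝ)
    (k l m : ℕ) (N T : ℝ) (hN : N ≠ 0)
    (h : IsSRGMatrix A (Fintype.card X) k l m)
    (hK : (k : ℝ) = T * (N - 1))
    (hea : IsRestrictedEig k l m (N - T))
    (heb : IsRestrictedEig k l m (-T)) :
    (m : ℝ) = T ^ 2 - T ∧ (l : ℝ) = T ^ 2 - 3 * T + N ∧
    A * allOnes X = (T * (N - 1)) • allOnes X ∧
    allOnes X * A = (T * (N - 1)) • allOnes X ∧
    A * A = (T * (N - T)) • (1 : Matrix X X ℝ) + (N - 2 * T) • A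
      + (T ^ 2 - T) • allOnes X := by
  obtain ⟨-, hsym, hdiag, h01, -, -, heq⟩ := h
  unfold IsRestrictedEig at hea heb
  have hLM : (l : ℝ) - m = N - 2 * T := by
    have h0 : ((l : ℝ) - m) * N = (N - 2 * T) * N := by linear_combination heb - hea
    exact mul_right_cancel₀ hN h0
  have hM : (m : ℝ) = T ^ 2 - T := by linear_combination heb - T * hLM + hK
  have hL : (l : ℝ) = T ^ 2 - 3 * T + N := by linear_combination hLM + hM
  -- row sums
  have hrow : ∀ x, ∑ y, A x y = (k : ℝ) := by
    intro x
    have h2 := congrFun (congrFun heq x) x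
    rw [Matrix.mul_apply] at h2
    have h3 : ∑ y, A x y * A y x = ∑ y, A x y := by
      apply Finset.sum_congr rfl
      intro y _
      have hyx : A y x = A x y := hsym.apply x y
      rcases h01 x y with h0 | h0 <;> rw [hyx, h0] <;> ring
    rw [h3] at h2
    rw [h2]
    simp [allOnes, Matrix.add_apply, Matrix.sub_apply, Matrix.smul_apply,
      Matrix.one_apply_eq, hdiag x]
  have hAJ : A * allOnes X = (T * (N - 1)) • allOnes X := by
    ext x y
    rw [Matrix.mul_apply]
    simp only [allOnes, Matrix.of_apply, mul_one, Matrix.smul_apply, smul_eq_mul]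
    rw [hrow x, hK]
    try ring
  have hJA : allOnes X * A = (T * (N - 1)) • allOnes X := by
    ext x y
    rw [Matrix.mul_apply]
    simp only [allOnes, Matrix.of_apply, one_mul, Matrix.smul_apply, smul_eq_mul]
    rw [show ∑ z, A z y = ∑ z, A y z from
      Finset.sum_congr rfl fun z _ => hsym.apply y z, hrow y, hK]
    try ring
  refine ⟨hM, hL, hAJ, hJA, ?_⟩
  rw [heq, hK, hL, hM]
  module

lemma key_product {X : Type*} [Fintype X] [DecidableEq X] (A1 A2 : Matrix X X ℝ)
    (N T1 T2 : ℝ)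
    (hcard : (Fintype.card X : ℝ) = N ^ 2)
    (hs1 : A1.IsSymm) (hs2 : A2.IsSymm)
    (hd1 : ∀ x, A1 x x = 0) (hd2 : ∀ x, A2 x x = 0)
    (hq1 : A1 * A1 = (T1 * (N - T1)) • (1 : Matrix X X ℝ) + (N - 2 * T1) • A1
      + (T1 ^ 2 - T1) • allOnes X)
    (hq2 : A2 * A2 = (T2 * (N - T2)) • (1 : Matrix X X ℝ) + (N - 2 * T2) • A2
      + (T2 ^ 2 - T2) • allOnes X)
    (hJ1 : A1 * allOnes X = (T1 * (N - 1)) • allOnes X)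
    (hJ1' : allOnes X * A1 = (T1 * (N - 1)) • allOnes X)
    (hJ2 : A2 * allOnes X = (T2 * (N - 1)) • allOnes X)
    (hJ2' : allOnes X * A2 = (T2 * (N - 1)) • allOnes X)
    (hdisj : ∀ x y, A1 x y * A2 x y = 0)
    (hcomm : A1 * A2 = A2 * A1) :
    A1 * A2 = (T1 * T2) • allOnes X - T1 • A2 - T2 • A1
      - (T1 * T2) • (1 : Matrix X X ℝ) := by
  have hJJ : allOnes X * allOnes X = (N ^ 2) • allOnes X := by
    ext x y
    rw [Matrix.mul_apply]
    simp [allOnes, ← hcard]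
  -- derived product reductions
  have hA2P : A2 * (A1 * A2) = (T2 * (N - T2)) • A1 + (N - 2 * T2) • (A1 * A2)
      + ((T2 ^ 2 - T2) * (T1 * (N - 1))) • allOnes X := by
    rw [hcomm, ← mul_assoc, hq2]
    simp only [add_mul, smul_mul_assoc, one_mul, hJ1', ← hcomm]
    module
  have hPA2 : (A1 * A2) * A2 = (T2 * (N - T2)) • A1 + (N - 2 * T2) • (A1 * A2)
      + ((T2 ^ 2 - T2) * (T1 * (N - 1))) • allOnes X := by
    rw [mul_assoc, hq2]
    simp only [mul_add, mul_smul_comm, mul_one, hJ1]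
    module
  have hA1P : A1 * (A1 * A2) = (T1 * (N - T1)) • A2 + (N - 2 * T1) • (A1 * A2)
      + ((T1 ^ 2 - T1) * (T2 * (N - 1))) • allOnes X := by
    rw [← mul_assoc, hq1]
    simp only [add_mul, smul_mul_assoc, one_mul, hJ2']
    module
  have hPA1 : (A1 * A2) * A1 = (T1 * (N - T1)) • A2 + (N - 2 * T1) • (A1 * A2)
      + ((T1 ^ 2 - T1) * (T2 * (N - 1))) • allOnes X := by
    rw [hcomm, mul_assoc, hq1]
    simp only [mul_add, mul_smul_comm, mul_one, hJ2, ← hcomm]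
    module
  have hPJ : (A1 * A2) * allOnes X = ((T1 * (N - 1)) * (T2 * (N - 1))) • allOnes X := by
    rw [mul_assoc, hJ2]
    simp only [mul_smul_comm, hJ1]
    module
  have hJP : allOnes X * (A1 * A2) = ((T1 * (N - 1)) * (T2 * (N - 1))) • allOnes X := by
    rw [← mul_assoc, hJ1']
    simp only [smul_mul_assoc, hJ2']
    module
  have hPP : (A1 * A2) * (A1 * A2) = ((N - 2 * T1) * (N - 2 * T2)) • (A1 * A2)
      + ((T1 * (N - T1)) * (T2 * (N - T2))) • (1 : Matrix X X ℝ)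
      + ((T2 * (N - T2)) * (N - 2 * T1)) • A1 + ((N - 2 * T2) * (T1 * (N - T1))) • A2
      + ((T2 * (N - T2)) * (T1 ^ 2 - T1)
        + (N - 2 * T2) * ((T1 ^ 2 - T1) * (T2 * (N - 1)))
        + (T2 ^ 2 - T2) * (T1 * (N - 1)) * (T1 * (N - 1))) • allOnes X := by
    rw [mul_assoc, hA2P]
    simp only [mul_add, mul_smul_comm, hq1, hA1P, hJ1]
    module
  set D : Matrix X X ℝ := A1 * A2 + T1 • A2 + T2 • A1 + (T1 * T2) • (1 : Matrix X X ℝ)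
    - (T1 * T2) • allOnes X with hDdef
  have hDD : D * D = (N ^ 2) • D := by
    rw [hDdef]
    simp only [add_mul, mul_add, sub_mul, mul_sub, smul_mul_assoc, mul_smul_comm,
      mul_one, one_mul, hPP, hPA2, hPA1, hA1P, hA2P, hPJ, hJP, hq1, hq2, hJ1, hJ1',
      hJ2, hJ2', hJJ, ← hcomm]
    module
  have htrP : Matrix.trace (A1 * A2) = 0 := by
    rw [Matrix.trace]
    apply Finset.sum_eq_zero
    intro x _
    rw [Matrix.diag_apply, Matrix.mul_apply]
    apply Finset.sum_eq_zero
    intro y _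
    rw [hs2.apply x y]
    exact hdisj x y
  have htr1 : Matrix.trace A1 = 0 := Finset.sum_eq_zero fun x _ => hd1 x
  have htr2 : Matrix.trace A2 = 0 := Finset.sum_eq_zero fun x _ => hd2 x
  have htrJ : Matrix.trace (allOnes X) = (Fintype.card X : ℝ) := by
    simp [Matrix.trace, Matrix.diag, allOnes]
  have htrD : Matrix.trace D = 0 := by
    rw [hDdef]
    simp only [Matrix.trace_add, Matrix.trace_sub, Matrix.trace_smul, htrP, htr1, htr2,
      htrJ, Matrix.trace_one, hcard]
    simp
  have htrDD : Matrix.trace (D * D) = 0 := by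
    rw [hDD, Matrix.trace_smul, htrD, smul_zero]
  have hDt : Dᵀ = D := by
    rw [hDdef]
    simp only [Matrix.transpose_add, Matrix.transpose_sub, Matrix.transpose_smul,
      Matrix.transpose_mul, hs1.eq, hs2.eq, Matrix.transpose_one, hcomm]
    have : (allOnes X)ᵀ = allOnes X := by ext x y; simp [allOnes]
    rw [this]
  have hD0 : D = 0 := by
    have hsq : ∑ x, ∑ y, (D x y) ^ 2 = 0 := by
      rw [← htrDD, Matrix.trace]
      apply Finset.sum_congr rfl
      intro x _
      rw [Matrix.diag_apply, Matrix.mul_apply]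
      apply Finset.sum_congr rfl
      intro y _
      have : D y x = D x y := by
        conv_rhs => rw [← hDt, Matrix.transpose_apply]
      rw [this]; ring
    ext a b
    have h5 : ∑ y, (D a y) ^ 2 = 0 := by
      have := (Finset.sum_eq_zero_iff_of_nonneg (fun x _ =>
        Finset.sum_nonneg fun y _ => sq_nonneg (D x y))).mp hsq a (Finset.mem_univ a)
      exact this
    have h6 : (D a b) ^ 2 = 0 :=
      (Finset.sum_eq_zero_iff_of_nonneg (fun y _ => sq_nonneg (D a y))).mp h5 b
        (Finset.mem_univ b)
    simpa using (pow_eq_zero_iff (two_ne_zero)).mp h6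
  have key : A1 * A2 - ((T1 * T2) • allOnes X - T1 • A2 - T2 • A1
      - (T1 * T2) • (1 : Matrix X X ℝ)) = D := by
    rw [hDdef]; module
  have := sub_eq_zero.mp (key.trans hD0)
  exact this

/-- The union of two edge-disjoint commuting strongly regular graphs of
the same (Latin square or negative Latin square) type with parameters `t1`, `t2`, if not
complete, is strongly regular of the same type with parameter `t1 + t2`. -/
theorem union_same_type
    {X : Type*} [Fintype X] [DecidableEq X] (A1 A2 : Matrix X X ℝ)
    (n t1 t2 : ℤ) (k1 l1 m1 k2 l2 m2 : ℕ)
    (hsign : (0 < n ∧ 0 < t1 ∧ 0 < t2) ∨ (n < 0 ∧ t1 < 0 ∧ t2 < 0))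
    (hv : (Fintype.card X : ℤ) = n ^ 2)
    (h1 : IsSRGMatrix A1 (Fintype.card X) k1 l1 m1)
    (hk1 : (k1 : ℤ) = t1 * (n - 1))
    (he1a : IsRestrictedEig k1 l1 m1 ((n : ℝ) - (t1 : ℝ)))
    (he1b : IsRestrictedEig k1 l1 m1 (-(t1 : ℝ)))
    (h2 : IsSRGMatrix A2 (Fintype.card X) k2 l2 m2)
    (hk2 : (k2 : ℤ) = t2 * (n - 1))
    (he2a : IsRestrictedEig k2 l2 m2 ((n : ℝ) - (t2 : ℝ)))
    (he2b : IsRestrictedEig k2 l2 m2 (-(t2 : ℝ)))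
    (hdisj : ∀ x y, A1 x y * A2 x y = 0)
    (hcomm : A1 * A2 = A2 * A1)
    (hnc : A1 + A2 ≠ allOnes X - 1) :
    ∃ k l m : ℕ, (k : ℤ) = (t1 + t2) * (n - 1) ∧
      IsSRGMatrix (A1 + A2) (Fintype.card X) k l m ∧
      IsRestrictedEig k l m ((n : ℝ) - ((t1 : ℝ) + (t2 : ℝ))) ∧
      IsRestrictedEig k l m (-((t1 : ℝ) + (t2 : ℝ))) := by
  have hN : ((n : ℤ) : ℝ) ≠ 0 := by
    have : n ≠ 0 := by rcases hsign with ⟨h, -, -⟩ | ⟨h, -, -⟩ <;> omega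
    exact_mod_cast this
  have hK1 : (k1 : ℝ) = (t1 : ℝ) * ((n : ℝ) - 1) := by exact_mod_cast hk1
  have hK2 : (k2 : ℝ) = (t2 : ℝ) * ((n : ℝ) - 1) := by exact_mod_cast hk2
  have hcard : ((Fintype.card X : ℕ) : ℝ) = ((n : ℝ)) ^ 2 := by exact_mod_cast hv
  obtain ⟨hm1r, hl1r, hJ1, hJ1', hq1⟩ :=
    srg_normalize A1 k1 l1 m1 (n : ℝ) (t1 : ℝ) hN h1 hK1 he1a he1b
  obtain ⟨hm2r, hl2r, hJ2, hJ2', hq2⟩ :=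
    srg_normalize A2 k2 l2 m2 (n : ℝ) (t2 : ℝ) hN h2 hK2 he2a he2b
  obtain ⟨-, hs1, hd1, h011, hne1, -, -⟩ := h1
  obtain ⟨-, hs2, hd2, h012, -, -, -⟩ := h2
  have hP := key_product A1 A2 (n : ℝ) (t1 : ℝ) (t2 : ℝ) hcard hs1 hs2 hd1 hd2
    hq1 hq2 hJ1 hJ1' hJ2 hJ2' hdisj hcomm
  have hBB : (A1 + A2) * (A1 + A2) =
      (((t1 : ℝ) + t2) * ((n : ℝ) - ((t1 : ℝ) + t2))) • (1 : Matrix X X ℝ)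
      + ((n : ℝ) - 2 * ((t1 : ℝ) + t2)) • (A1 + A2)
      + (((t1 : ℝ) + t2) ^ 2 - ((t1 : ℝ) + t2)) • allOnes X := by
    simp only [add_mul, mul_add, ← hcomm, hP, hq1, hq2]
    module
  -- 0/1 entries of the union
  have hB01 : ∀ a b, (A1 + A2) a b = 0 ∨ (A1 + A2) a b = 1 := by
    intro a b
    rcases h011 a b with h | h <;> rcases h012 a b with h' | h'
    · left; simp [Matrix.add_apply, h, h']
    · right; simp [Matrix.add_apply, h, h']
    · right; simp [Matrix.add_apply, h, h']
    · exfalso; have := hdisj a b; rw [h, h'] at this; norm_num at this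
  have hBnn : ∀ a b, (0 : ℝ) ≤ (A1 + A2) a b := by
    intro a b; rcases hB01 a b with h | h <;> rw [h] <;> norm_num
  -- an edge of the union
  obtain ⟨x, y, hxy0⟩ : ∃ x y, A1 x y ≠ 0 := by
    by_contra h; push_neg at h; exact hne1 (by ext a b; simpa using h a b)
  have hx1 : A1 x y = 1 := (h011 x y).resolve_left hxy0
  have hxy : x ≠ y := by
    intro h; rw [h, hd1 y] at hx1; norm_num at hx1
  have hx2 : A2 x y = 0 := by
    have := hdisj x y; rwa [hx1, one_mul] at this
  have hBxy : (A1 + A2) x y = 1 := by simp [Matrix.add_apply, hx1, hx2]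
  -- nonnegativity of the parameters
  have hlR : (0 : ℝ) ≤ (n : ℝ) + ((t1 : ℝ) + t2) ^ 2 - 3 * ((t1 : ℝ) + t2) := by
    have h := congrFun (congrFun hBB x) y
    rw [Matrix.mul_apply] at h
    have hL : (0 : ℝ) ≤ ∑ z, (A1 + A2) x z * (A1 + A2) z y :=
      Finset.sum_nonneg fun z _ => mul_nonneg (hBnn x z) (hBnn z y)
    rw [h] at hL
    simp only [Matrix.add_apply, Matrix.smul_apply, smul_eq_mul,
      Matrix.one_apply_ne hxy, allOnes, Matrix.of_apply, mul_zero, mul_one] at hL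
    rw [show A1 x y + A2 x y = 1 by rw [hx1, hx2]; ring] at hL
    linarith
  have hlZ : (0 : ℤ) ≤ n + (t1 + t2) ^ 2 - 3 * (t1 + t2) := by exact_mod_cast hlR
  have hkZ : (0 : ℤ) ≤ (t1 + t2) * (n - 1) := by
    rcases hsign with ⟨ha, hb, hc⟩ | ⟨ha, hb, hc⟩ <;> nlinarith
  have hmZ : (0 : ℤ) ≤ (t1 + t2) * ((t1 + t2) - 1) := by
    rcases le_or_gt 1 (t1 + t2) with h | h
    · exact mul_nonneg (by omega) (by omega)
    · nlinarith [mul_nonneg (by omega : (0 : ℤ) ≤ -(t1 + t2))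
        (by omega : (0 : ℤ) ≤ 1 - (t1 + t2))]
  have hkC : ((((t1 + t2) * (n - 1)).toNat : ℤ)) = (t1 + t2) * (n - 1) :=
    Int.toNat_of_nonneg hkZ
  have hlC : (((n + (t1 + t2) ^ 2 - 3 * (t1 + t2)).toNat : ℤ))
      = n + (t1 + t2) ^ 2 - 3 * (t1 + t2) := Int.toNat_of_nonneg hlZ
  have hmC : ((((t1 + t2) * ((t1 + t2) - 1)).toNat : ℤ))
      = (t1 + t2) * ((t1 + t2) - 1) := Int.toNat_of_nonneg hmZ
  have hkR : ((((t1 + t2) * (n - 1)).toNat : ℕ) : ℝ)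
      = ((t1 : ℝ) + t2) * ((n : ℝ) - 1) := by
    have := congrArg (fun z : ℤ => (z : ℝ)) hkC
    push_cast at this
    linarith
  have hlRR : (((n + (t1 + t2) ^ 2 - 3 * (t1 + t2)).toNat : ℕ) : ℝ)
      = ((t1 : ℝ) + t2) ^ 2 - 3 * ((t1 : ℝ) + t2) + (n : ℝ) := by
    have := congrArg (fun z : ℤ => (z : ℝ)) hlC
    push_cast at this
    linarith
  have hmR : ((((t1 + t2) * ((t1 + t2) - 1)).toNat : ℕ) : ℝ)
      = ((t1 : ℝ) + t2) ^ 2 - ((t1 : ℝ) + t2) := by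
    have := congrArg (fun z : ℤ => (z : ℝ)) hmC
    push_cast at this
    linear_combination this
  refine ⟨((t1 + t2) * (n - 1)).toNat, (n + (t1 + t2) ^ 2 - 3 * (t1 + t2)).toNat,
    ((t1 + t2) * ((t1 + t2) - 1)).toNat, hkC, ⟨rfl, hs1.add hs2, ?_, hB01, ?_, hnc, ?_⟩,
    ?_, ?_⟩
  · intro a; simp [Matrix.add_apply, hd1 a, hd2 a]
  · intro h
    have := congrFun (congrFun h x) y
    rw [hBxy] at this
    simp at this
  · rw [hBB, hkR, hlRR, hmR]
    module
  · unfold IsRestrictedEig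
    rw [hkR, hlRR, hmR]
    ring
  · unfold IsRestrictedEig
    rw [hkR, hlRR, hmR]
    ring
end

section
/- Let n be a positive integer and let Γ be a strongly regular graph with parameters (n², k, λ, μ). If a is a restricted eigenvalue of Γ such that k = −a(n−1), then Γ is of Latin square type or of negative Latin square type. -/
open Matrix

/-- A strongly regular graph on `n²` vertices with valency `k` that has
a restricted eigenvalue `a` with `k = -a (n - 1)` is of Latin square type or of negative
Latin square type. -/
theorem srg_with_special_eigenvalue_is_latin_type
    {X : Type*} [Fintype X] [DecidableEq X] (A : Matrix X X ℝ) (n k l m : ℕ)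
    (hn : 0 < n) (h : IsSRGMatrix A (n ^ 2) k l m) (a : ℝ)
    (ha : IsRestrictedEig k l m a)
    (hka : (k : ℝ) = -a * ((n : ℝ) - 1)) :
    IsLSParams (n ^ 2) k l m ∨ IsNLSParams (n ^ 2) k l m := by
  classical
  obtain ⟨hcard, hsymm, hdiag, h01, hA0, -, heq⟩ := h
  have hsym' : ∀ x y : X, A y x = A x y := fun x y => by
    have := congrFun (congrFun hsymm x) y
    simpa [Matrix.transpose_apply] using this
  -- regularity: row sums equal k
  have hreg : ∀ x : X, ∑ y, A x y = (k : ℝ) := by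
    intro x
    have hx := congrFun (congrFun heq x) x
    rw [Matrix.mul_apply] at hx
    have hterm : ∀ y : X, A x y * A y x = A x y := fun y => by
      rcases h01 x y with h0 | h0 <;> simp [hsym' x y, h0]
    rw [Finset.sum_congr rfl fun y _ => hterm y] at hx
    simpa [Matrix.add_apply, Matrix.sub_apply, Matrix.smul_apply, Matrix.one_apply,
      allOnes, hdiag x, smul_eq_mul] using hx
  -- X is nonempty
  have hcardpos : 0 < Fintype.card X := by
    rw [hcard]; positivity
  obtain ⟨x0⟩ := Fintype.card_pos_iff.mp hcardpos
  -- second parameter equation from summing one row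
  have h2 : (k : ℝ) * k = k + l * k + m * ((n : ℝ) ^ 2 - 1 - k) := by
    have hx := congrFun heq x0
    have hL : ∑ y, (A * A) x0 y = (k : ℝ) * k := by
      simp only [Matrix.mul_apply]
      rw [Finset.sum_comm]
      calc ∑ z, ∑ y, A x0 z * A z y
          = ∑ z : X, A x0 z * (k : ℝ) := by
            refine Finset.sum_congr rfl fun z _ => ?_
            rw [← Finset.mul_sum, hreg z]
        _ = (k : ℝ) * k := by rw [← Finset.sum_mul, hreg x0, mul_comm]
    have hR : ∑ y, ((k : ℝ) • (1 : Matrix X X ℝ) + (l : ℝ) • A +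
        (m : ℝ) • (allOnes X - 1 - A)) x0 y
        = (k : ℝ) * 1 + l * k + m * ((n : ℝ) ^ 2 - 1 * 1 - k) := by
      have hone : ∑ y, (1 : Matrix X X ℝ) x0 y = (1 : ℝ) := by
        simp [Matrix.one_apply]
      have hJ : ∑ y, (allOnes X) x0 y = ((n : ℝ) ^ 2) := by
        simp [allOnes]
        rw [hcard]
        push_cast
        ring
      simp only [Matrix.add_apply, Matrix.sub_apply, Matrix.smul_apply, smul_eq_mul,
        Finset.sum_add_distrib, Finset.sum_sub_distrib, ← Finset.mul_sum]
      rw [hone, hJ, hreg x0]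
      ring
    have : ∑ y, (A * A) x0 y = ∑ y, ((k : ℝ) • (1 : Matrix X X ℝ) + (l : ℝ) • A +
        (m : ℝ) • (allOnes X - 1 - A)) x0 y := by
      refine Finset.sum_congr rfl fun y _ => ?_
      rw [congrFun hx y]
    rw [hL, hR] at this
    linarith [this]
  -- k ≥ 1
  have hk1 : (1 : ℝ) ≤ k := by
    obtain ⟨x, y, hxy⟩ : ∃ x y : X, A x y ≠ 0 := by
      by_contra hc
      push_neg at hc
      exact hA0 (Matrix.ext fun x y => hc x y)
    have h1 : A x y = 1 := (h01 x y).resolve_left hxy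
    calc (1 : ℝ) = A x y := h1.symm
      _ ≤ ∑ z, A x z := by
          refine Finset.single_le_sum (fun z _ => ?_) (Finset.mem_univ y)
          rcases h01 x z with h0 | h0 <;> simp [h0]
      _ = k := hreg x
  -- n ≥ 2
  have hn2 : 2 ≤ n := by
    rcases Nat.lt_or_ge n 2 with h' | h'
    · interval_cases n
      · norm_num at hka
        rw [hka] at hk1
        norm_num at hk1
    · exact h'
  have hn2R : (2 : ℝ) ≤ (n : ℝ) := by exact_mod_cast hn2
  -- a < 0
  have haneg : a < 0 := by nlinarith
  have ha0 : a ≠ 0 := ne_of_lt haneg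
  have haq := ha
  unfold IsRestrictedEig at haq
  -- m = a^2 + a
  have hm : (m : ℝ) = a ^ 2 + a := by
    have key : (n : ℝ) * ((n : ℝ) - 1) * (a ^ 2 + a - m) = 0 := by
      linear_combination h2 + ((1 : ℝ) + l - m - k + a * ((n : ℝ) - 1)) * hka +
        ((n : ℝ) - 1) * haq + ((n : ℝ) - 1) * hka
    have hnn : (0 : ℝ) < (n : ℝ) * ((n : ℝ) - 1) := by nlinarith
    have := (mul_eq_zero.mp key).resolve_left (ne_of_gt hnn)
    linarith
  -- l - m = 2a + n
  have hlm : (l : ℝ) - m = 2 * a + n := by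
    have : a * ((l : ℝ) - m) = a * (2 * a + (n : ℝ)) := by
      linear_combination -haq - hka + hm
    exact mul_left_cancel₀ ha0 this
  -- the other restricted eigenvalue is n + a
  have hEig : IsRestrictedEig k l m ((n : ℝ) + a) := by
    unfold IsRestrictedEig
    linear_combination (-((n : ℝ) + a)) * hlm - hka + hm
  -- t := -a is a rational algebraic integer, hence an integer
  have hne : ((n : ℚ) - 1) ≠ 0 := by
    have : (2 : ℚ) ≤ (n : ℚ) := by exact_mod_cast hn2
    linarith
  set q : ℚ := (k : ℚ) / ((n : ℚ) - 1) with hqdef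
  have hq : (q : ℝ) = -a := by
    rw [hqdef]
    push_cast
    rw [div_eq_iff (by exact_mod_cast hne)]
    linarith [hka]
  have hqeq : q ^ 2 + ((l : ℚ) - (m : ℚ)) * q - ((k : ℚ) - (m : ℚ)) = 0 := by
    have hcast : ((q ^ 2 + ((l : ℚ) - (m : ℚ)) * q - ((k : ℚ) - (m : ℚ)) : ℚ) : ℝ)
        = ((0 : ℚ) : ℝ) := by
      push_cast
      rw [hq]
      linear_combination haq
    exact_mod_cast hcast
  have hint : IsIntegral ℤ q := by
    refine ⟨Polynomial.X ^ 2 + (Polynomial.C ((l : ℤ) - (m : ℤ)) * Polynomial.X +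
      Polynomial.C (-((k : ℤ) - (m : ℤ)))), ?_, ?_⟩
    · exact Polynomial.monic_X_pow_add Polynomial.degree_linear_lt
    · simp only [Polynomial.eval₂_add, Polynomial.eval₂_mul, Polynomial.eval₂_pow,
        Polynomial.eval₂_X, Polynomial.eval₂_C]
      push_cast
      linear_combination hqeq
  obtain ⟨t0, ht0⟩ := IsIntegrallyClosed.isIntegral_iff.mp hint
  have ht0q : ((t0 : ℚ)) = q := by exact_mod_cast ht0
  have ht0R : ((t0 : ℤ) : ℝ) = -a := by
    rw [← hq, ← ht0q]
    push_cast
    ring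
  left
  refine ⟨(n : ℤ), t0, ?_, ?_, ?_, ?_, ?_, ?_⟩
  · exact_mod_cast hn
  · have : (0 : ℝ) < (t0 : ℝ) := by rw [ht0R]; linarith
    exact_mod_cast this
  · push_cast; ring
  · have : ((k : ℤ) : ℝ) = ((t0 * ((n : ℤ) - 1) : ℤ) : ℝ) := by
      push_cast
      rw [ht0R]
      linarith [hka]
    exact_mod_cast this
  · have e1 : (((n : ℤ) : ℝ)) - ((t0 : ℤ) : ℝ) = (n : ℝ) + a := by
      rw [ht0R]; push_cast; ring
    rw [e1]; exact hEig
  · have e2 : -((t0 : ℤ) : ℝ) = a := by rw [ht0R]; ring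
    rw [e2]; exact ha
end
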